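/- arXiv:2604.21833 — 6 statements merged into one kernel-verified Lean document; each statement's English description precedes it below -/
import Mathlib

section
/- Let M be a unital complex C*-algebra whose center consists only of scalar multiples of the identity, and let ψ be a *-algebra automorphism of M. If x ∈ M is nonzero and satisfies x·m = ψ(m)·x for every m ∈ M, then ψ is inner: there exists a unitary u ∈ M such that ψ(m) = u·m·u* for all m ∈ M. -/
/-- If a unital complex C*-algebra `M` has trivial center (every central element is a
scalar multiple of the identity), `ψ` is a *-algebra automorphism of `M`, and a nonzero
`x ∈ M` satisfies `x * m = ψ m * x` for all `m`, then `ψ` is inner, implemented by a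
unitary `u`. -/
theorem inner_of_intertwiner
    {M : Type*} [NormedRing M] [StarRing M] [CStarRing M] [CompleteSpace M]
    [NormedAlgebra ℂ M] [StarModule ℂ M]
    (hcenter : ∀ z : M, (∀ m : M, z * m = m * z) → ∃ c : ℂ, z = c • (1 : M))
    (ψ : M ≃⋆ₐ[ℂ] M)
    (x : M) (hx : x ≠ 0)
    (hcomm : ∀ m : M, x * m = ψ m * x) :
    ∃ u : M, star u * u = 1 ∧ u * star u = 1 ∧ ∀ m : M, ψ m = u * m * star u := by
  letI : CStarAlgebra M := {}
  letI := CStarAlgebra.spectralOrder M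
  haveI := CStarAlgebra.spectralOrderedRing M
  -- the adjoint intertwining relation
  have hcomm' : ∀ m : M, star x * ψ m = m * star x := by
    intro m
    have h := congrArg star (hcomm (star m))
    rw [star_mul, star_mul, star_star] at h
    rw [map_star, star_star] at h
    exact h.symm
  have hcomm'' : ∀ m : M, star x * m = ψ.symm m * star x := by
    intro m
    have h := hcomm' (ψ.symm m)
    rwa [StarAlgEquiv.apply_symm_apply] at h
  -- `star x * x` is central
  obtain ⟨c, hc⟩ := hcenter (star x * x) (by
    intro m
    calc star x * x * m = star x * (ψ m * x) := by rw [mul_assoc, hcomm]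
      _ = (star x * ψ m) * x := by rw [mul_assoc]
      _ = m * (star x * x) := by rw [hcomm', mul_assoc])
  -- `x * star x` is central
  obtain ⟨c', hc'⟩ := hcenter (x * star x) (by
    intro m
    calc x * star x * m = x * (ψ.symm m * star x) := by rw [mul_assoc, hcomm'']
      _ = (x * ψ.symm m) * star x := by rw [mul_assoc]
      _ = ψ (ψ.symm m) * x * star x := by rw [hcomm]
      _ = m * (x * star x) := by rw [StarAlgEquiv.apply_symm_apply, mul_assoc])
  -- the two scalars agree
  have hcc : c' = c := by
    have h3 : x * (star x * x) = (x * star x) * x := (mul_assoc _ _ _).symm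
    rw [hc, hc'] at h3
    rw [mul_smul_comm, smul_mul_assoc, mul_one, one_mul] at h3
    have h4 : (c - c') • x = 0 := by rw [sub_smul, h3, sub_self]
    rcases smul_eq_zero.mp h4 with h | h
    · exact (sub_eq_zero.mp h).symm
    · exact absurd h hx
  -- the scalar is real
  have hreal : star c = c := by
    have h4 : star (star x * x) = star x * x := by rw [star_mul, star_star]
    rw [hc, star_smul, star_one] at h4
    have h5 : (star c - c) • (1 : M) = 0 := by rw [sub_smul, h4, sub_self]
    rcases smul_eq_zero.mp h5 with h | h
    · exact sub_eq_zero.mp h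
    · exfalso
      apply hx
      have : star x * x = 0 := by rw [hc, h, smul_zero]
      exact (CStarRing.star_mul_self_eq_zero_iff x).mp this
  -- the scalar is nonzero
  have hc0 : c ≠ 0 := by
    intro h
    apply hx
    have : star x * x = 0 := by rw [hc, h, zero_smul]
    exact (CStarRing.star_mul_self_eq_zero_iff x).mp this
  set r : ℝ := c.re with hr
  have hcr : c = (r : ℂ) := by
    have hreal' : (starRingEnd ℂ) c = c := hreal
    rw [hr]
    exact (Complex.conj_eq_iff_re.mp hreal').symm
  have hr0 : r ≠ 0 := by
    intro h
    exact hc0 (by rw [hcr, h, Complex.ofReal_zero])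
  -- positivity of the scalar
  have hpos : 0 < r := by
    rcases lt_trichotomy 0 r with h | h | h
    · exact h
    · exact absurd h.symm hr0
    · exfalso
      have hge : (0 : M) ≤ c • 1 := hc ▸ star_mul_self_nonneg x
      have hle : c • (1 : M) ≤ 0 := by
        have key : (0 : M) ≤ star (((Real.sqrt (-r) : ℂ)) • (1 : M)) *
            (((Real.sqrt (-r) : ℂ)) • (1 : M)) := star_mul_self_nonneg _
        have heq : star (((Real.sqrt (-r) : ℂ)) • (1 : M)) *
            (((Real.sqrt (-r) : ℂ)) • (1 : M)) = -(c • (1 : M)) := by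
          rw [star_smul, star_one, smul_mul_assoc, one_mul, smul_smul, ← neg_smul]
          congr 1
          rw [Complex.star_def, Complex.conj_ofReal, ← Complex.ofReal_mul,
            Real.mul_self_sqrt (by linarith), hcr, ← Complex.ofReal_neg]
        rw [heq] at key
        exact neg_nonneg.mp key
      have h0 : c • (1 : M) = 0 := le_antisymm hle hge
      rcases smul_eq_zero.mp h0 with h' | h'
      · exact hc0 h'
      · exact hx (by rw [← mul_one x, h', mul_zero])
  -- the unitary
  set t : ℝ := (Real.sqrt r)⁻¹ with ht
  have hts : (t : ℂ) * (t : ℂ) * c = 1 := by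
    rw [hcr, ← Complex.ofReal_mul, ← Complex.ofReal_mul, ht]
    rw [← Real.sqrt_inv]
    rw [Real.mul_self_sqrt (by positivity)]
    rw [inv_mul_cancel₀ hr0, Complex.ofReal_one]
  refine ⟨(t : ℂ) • x, ?_, ?_, ?_⟩
  · rw [star_smul, Complex.star_def, Complex.conj_ofReal, smul_mul_assoc, mul_smul_comm,
      smul_smul, hc, smul_smul, hts, one_smul]
  · rw [star_smul, Complex.star_def, Complex.conj_ofReal, smul_mul_assoc, mul_smul_comm,
      smul_smul, hc', hcc, smul_smul, hts, one_smul]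
  · intro m
    rw [star_smul, Complex.star_def, Complex.conj_ofReal, smul_mul_assoc, smul_mul_assoc,
      mul_smul_comm, smul_smul, hcomm m, mul_assoc (ψ m), hc',
      hcc, mul_smul_comm, mul_one, smul_smul, hts, one_smul]
end

section
/- Innerness descends from matrix amplifications: Let M be a unital complex C*-algebra whose center consists only of scalar multiples of the identity, let ψ be a *-algebra automorphism of M, and let n ≥ 1. Let ψ̃ denote the entrywise application of ψ to n×n matrices over M (corresponding to id_{B(H)} ⊗ ψ for an n-dimensional Hilbert space H). Then there exists a unitary U in the *-algebra Mₙ(M) of n×n matrices over M with ψ̃(A) = U·A·U* for all A ∈ Mₙ(M) if and only if there exists a unitary u ∈ M with ψ(m) = u·m·u* for all m ∈ M. -/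
/-! Entrywise application of `ψ` fixes every matrix unit, so a unitary `U` implementing it
commutes with all matrix units and is therefore a scalar matrix `diag(u, …, u)`; comparing the
diagonal entries of `ψ̃(diag(m, …, m)) = U · diag(m, …, m) · U*` shows that `u` implements `ψ`.
Conversely `diag(u, …, u)` implements `ψ̃` whenever `u` implements `ψ`. -/

theorem commute_of_mul_mul_star_eq {R : Type*} [Monoid R] [Star R] {u a : R}
    (hu : star u * u = 1) (h : u * a * star u = a) : Commute u a :=
  calc u * a = u * a * (star u * u) := by rw [hu, mul_one]
    _ = u * a * star u * u := by simp only [mul_assoc]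
    _ = a * u := by rw [h]

namespace Matrix

variable {n R : Type*} [Fintype n] [DecidableEq n] [Semiring R] [StarRing R]

theorem star_scalar (a : R) : star (scalar n a) = scalar n (star a) := by
  rw [star_eq_conjTranspose, scalar_apply, diagonal_conjTranspose]
  rfl

theorem scalar_mem_unitary_iff [Nonempty n] {u : R} :
    scalar n u ∈ unitary (Matrix n n R) ↔ u ∈ unitary R := by
  simp only [Unitary.mem_iff, star_scalar, ← map_mul, ← map_one (scalar n), scalar_inj]

theorem scalar_mul_mul_star_scalar (u : R) (A : Matrix n n R) :
    scalar n u * A * star (scalar n u) = A.map fun a => u * a * star u := by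
  ext i j
  rw [star_scalar, scalar_apply, scalar_apply, mul_diagonal, diagonal_mul, map_apply]

theorem mem_range_scalar_of_conj_single_eq {U : Matrix n n R} (hU : star U * U = 1)
    (h : ∀ i j : n, U * single i j 1 * star U = single i j 1) :
    U ∈ Set.range (scalar n) :=
  mem_range_scalar_of_commute_single fun i j _ => (commute_of_mul_mul_star_eq hU (h i j)).symm

end Matrix

open Matrix in
theorem matrix_amplification_inner_iff_inner_general
    {M : Type*} [NormedRing M] [StarRing M]
    [NormedAlgebra ℂ M]
    (ψ : M ≃⋆ₐ[ℂ] M)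
    (n : ℕ) (hn : 1 ≤ n) :
    (∃ U : Matrix (Fin n) (Fin n) M, star U * U = 1 ∧ U * star U = 1 ∧
        ∀ A : Matrix (Fin n) (Fin n) M, A.map (fun m => ψ m) = U * A * star U) ↔
      (∃ u : M, star u * u = 1 ∧ u * star u = 1 ∧ ∀ m : M, ψ m = u * m * star u) := by
  have : Nonempty (Fin n) := ⟨⟨0, hn⟩⟩
  constructor
  · rintro ⟨U, hU₁, hU₂, hU⟩
    obtain ⟨u, rfl⟩ : U ∈ Set.range (scalar (Fin n)) :=
      mem_range_scalar_of_conj_single_eq hU₁ fun i j => by rw [← hU, map_single, map_one]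
    obtain ⟨hu₁, hu₂⟩ := scalar_mem_unitary_iff.mp ⟨hU₁, hU₂⟩
    refine ⟨u, hu₁, hu₂, fun m => ?_⟩
    have h := congr_fun₂ (hU (scalar (Fin n) m)) ⟨0, hn⟩ ⟨0, hn⟩
    rwa [scalar_mul_mul_star_scalar, map_apply, map_apply, scalar_apply, diagonal_apply_eq] at h
  · rintro ⟨u, hu₁, hu₂, hu⟩
    obtain ⟨hU₁, hU₂⟩ := scalar_mem_unitary_iff (n := Fin n).mpr ⟨hu₁, hu₂⟩
    refine ⟨scalar (Fin n) u, hU₁, hU₂, fun A => ?_⟩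
    simp only [scalar_mul_mul_star_scalar, hu]

/-- Innerness descends from matrix amplifications: for a unital complex C*-algebra `M`
with trivial center and a *-algebra automorphism `ψ` of `M`, the entrywise application
of `ψ` to `n × n` matrices over `M` (`n ≥ 1`) is implemented by a unitary matrix
`U ∈ Mₙ(M)` if and only if `ψ` itself is implemented by a unitary `u ∈ M`. -/
theorem matrix_amplification_inner_iff_inner
    {M : Type*} [NormedRing M] [StarRing M] [CStarRing M] [CompleteSpace M]
    [NormedAlgebra ℂ M] [StarModule ℂ M]
    (hcenter : ∀ z : M, (∀ m : M, z * m = m * z) → ∃ c : ℂ, z = c • (1 : M))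
    (ψ : M ≃⋆ₐ[ℂ] M)
    (n : ℕ) (hn : 1 ≤ n) :
    (∃ U : Matrix (Fin n) (Fin n) M, star U * U = 1 ∧ U * star U = 1 ∧
        ∀ A : Matrix (Fin n) (Fin n) M, A.map (fun m => ψ m) = U * A * star U) ↔
      (∃ u : M, star u * u = 1 ∧ u * star u = 1 ∧ ∀ m : M, ψ m = u * m * star u) :=
  matrix_amplification_inner_iff_inner_general ψ n hn
end

section
/- Let A be a unital C*-algebra and τ a positive unital linear functional on A; write ‖x‖₂ := √(Re τ(x*x)). Let u and v be unitaries in A and let b ∈ A be an element with 0 ≤ b ≤ 1 in the canonical order on self-adjoint elements. If 0 < ε ≤ 1 and ‖u − v·b‖₂ < ε, then ‖u − v‖₂ < ε + √(2ε). -/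
/-!
Read `τ` as a positive functional, so that `‖·‖₂` is the seminorm of its GNS
pre-Hilbert space. Since `v` is an isometry, `‖u - v‖₂ ≤ ‖u - v b‖₂ + ‖1 - b‖₂` and
`‖b‖₂ = ‖v b‖₂ > ‖u‖₂ - ε = 1 - ε`. From `b² ≤ b` one gets `(1 - b)² + b² ≤ 1`,
hence `‖1 - b‖₂² ≤ 1 - ‖b‖₂² < 2ε`.
-/

open scoped ComplexOrder

lemma CStarAlgebra.star_one_sub_mul_one_sub_add_star_mul_self_le_one {A : Type*} [CStarAlgebra A]
    [PartialOrder A] [StarOrderedRing A] {b : A} (hb0 : 0 ≤ b) (hb1 : b ≤ 1) :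
    star (1 - b) * (1 - b) + star b * b ≤ 1 := by
  have hbb : b * b ≤ b := by
    simpa only [pow_one, pow_two] using CStarAlgebra.pow_antitone hb0 hb1 one_le_two
  have hexpand : star (1 - b) * (1 - b) + star b * b = 1 - 2 • (b - b * b) := by
    rw [star_sub, star_one, (IsSelfAdjoint.of_nonneg hb0).star_eq]
    noncomm_ring
  rw [hexpand]
  exact sub_le_self _ (nsmul_nonneg (sub_nonneg.2 hbb) 2)

namespace PositiveLinearMap

variable {A : Type*} [CStarAlgebra A] [PartialOrder A] [StarOrderedRing A]

noncomputable def ofNonnegStarMulSelf (f : A →ₗ[ℂ] ℂ) (hf : ∀ x, 0 ≤ f (star x * x)) :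
    A →ₚ[ℂ] ℂ :=
  mk₀ f fun _ ha => by
    obtain ⟨b, rfl⟩ := CStarAlgebra.nonneg_iff_eq_star_mul_self.mp ha
    exact hf b

variable (f : A →ₚ[ℂ] ℂ)

lemma norm_toPreGNS_sq (a : A) : ‖f.toPreGNS a‖ ^ 2 = (f (star a * a)).re :=
  Real.sq_sqrt (Complex.nonneg_iff.mp (f.map_nonneg (star_mul_self_nonneg a))).1

lemma norm_toPreGNS_mul_of_star_mul_self_eq_one {v : A} (hv : star v * v = 1) (a : A) :
    ‖f.toPreGNS (v * a)‖ = ‖f.toPreGNS a‖ := by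
  rw [preGNS_norm_def, preGNS_norm_def, ofPreGNS_toPreGNS, ofPreGNS_toPreGNS, star_mul,
    mul_assoc, ← mul_assoc (star v), hv, one_mul]

lemma norm_toPreGNS_one_sub_sq_add_sq_le {b : A} (hb0 : 0 ≤ b) (hb1 : b ≤ 1) :
    ‖f.toPreGNS (1 - b)‖ ^ 2 + ‖f.toPreGNS b‖ ^ 2 ≤ (f 1).re := by
  rw [norm_toPreGNS_sq, norm_toPreGNS_sq, ← Complex.add_re, ← map_add]
  exact (Complex.le_def.mp <| OrderHomClass.mono f <|
    CStarAlgebra.star_one_sub_mul_one_sub_add_star_mul_self_le_one hb0 hb1).1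

theorem norm_toPreGNS_sub_lt_of_norm_toPreGNS_sub_mul_lt (hf : f 1 = 1) {u v b : A}
    (hu : star u * u = 1) (hv : star v * v = 1) (hb0 : 0 ≤ b) (hb1 : b ≤ 1) {ε : ℝ}
    (h : ‖f.toPreGNS (u - v * b)‖ < ε) :
    ‖f.toPreGNS (u - v)‖ < ε + √(2 * ε) := by
  have hu_norm : ‖f.toPreGNS u‖ = 1 := by
    rw [← pow_eq_one_iff_of_nonneg (norm_nonneg _) two_ne_zero, norm_toPreGNS_sq, hu, hf,
      Complex.one_re]
  have hb_norm : 1 - ε < ‖f.toPreGNS b‖ := by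
    have := norm_le_norm_add_norm_sub' (f.toPreGNS u) (f.toPreGNS (v * b))
    rw [← map_sub, norm_toPreGNS_mul_of_star_mul_self_eq_one f hv, hu_norm] at this
    linarith
  have hpyth := f.norm_toPreGNS_one_sub_sq_add_sq_le hb0 hb1
  rw [hf, Complex.one_re] at hpyth
  -- `2ε - 1 + t² > 2(1 - t) - 1 + t² = (1 - t)²` for `t = ‖b‖₂`
  have hdefect : ‖f.toPreGNS (1 - b)‖ < √(2 * ε) :=
    (Real.lt_sqrt (norm_nonneg _)).2 (by nlinarith [sq_nonneg (1 - ‖f.toPreGNS b‖)])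
  have hvb_sub : ‖f.toPreGNS (v * b - v)‖ = ‖f.toPreGNS (1 - b)‖ := by
    rw [← mul_sub_one, norm_toPreGNS_mul_of_star_mul_self_eq_one f hv, map_sub, map_sub,
      norm_sub_rev]
  calc ‖f.toPreGNS (u - v)‖
        ≤ ‖f.toPreGNS (u - v * b)‖ + ‖f.toPreGNS (v * b - v)‖ := by
        simpa only [map_sub] using
          norm_sub_le_norm_sub_add_norm_sub (f.toPreGNS u) (f.toPreGNS (v * b)) (f.toPreGNS v)
    _ < ε + √(2 * ε) := by rw [hvb_sub]; exact add_lt_add h hdefect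

end PositiveLinearMap

theorem unitary_close_of_close_to_contraction_general
    {A : Type*} [NormedRing A] [StarRing A] [CStarRing A] [CompleteSpace A]
    [NormedAlgebra ℂ A] [StarModule ℂ A] [PartialOrder A] [StarOrderedRing A]
    (τ : A →ₗ[ℂ] ℂ) (hτ1 : τ 1 = 1)
    (hτpos : ∀ x : A, 0 ≤ (τ (star x * x)).re ∧ (τ (star x * x)).im = 0)
    (n2 : A → ℝ) (hn2 : ∀ x, n2 x = Real.sqrt ((τ (star x * x)).re))
    (u v b : A)
    (hu : star u * u = 1 ∧ u * star u = 1)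
    (hv : star v * v = 1 ∧ v * star v = 1)
    (hb0 : 0 ≤ b) (hb1 : b ≤ 1)
    (ε : ℝ)
    (h : n2 (u - v * b) < ε) :
    n2 (u - v) < ε + Real.sqrt (2 * ε) := by
  let _ : CStarAlgebra A := {}
  let f := PositiveLinearMap.ofNonnegStarMulSelf τ fun x =>
    Complex.nonneg_iff.2 ⟨(hτpos x).1, (hτpos x).2.symm⟩
  have hn2f : ∀ x, n2 x = ‖f.toPreGNS x‖ := hn2
  rw [hn2f] at h ⊢
  exact f.norm_toPreGNS_sub_lt_of_norm_toPreGNS_sub_mul_lt hτ1 hu.1 hv.1 hb0 hb1 h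

/-- Quantitative polar-part approximation: in a unital C*-algebra `A` with a positive
unital linear functional `τ` and `‖x‖₂ := √(Re τ(x*x))`, if `u`, `v` are unitaries,
`0 ≤ b ≤ 1`, `0 < ε ≤ 1` and `‖u - v*b‖₂ < ε`, then `‖u - v‖₂ < ε + √(2ε)`. -/
theorem unitary_close_of_close_to_contraction
    {A : Type*} [NormedRing A] [StarRing A] [CStarRing A] [CompleteSpace A]
    [NormedAlgebra ℂ A] [StarModule ℂ A] [PartialOrder A] [StarOrderedRing A]
    (τ : A →ₗ[ℂ] ℂ) (hτ1 : τ 1 = 1)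
    (hτpos : ∀ x : A, 0 ≤ (τ (star x * x)).re ∧ (τ (star x * x)).im = 0)
    (n2 : A → ℝ) (hn2 : ∀ x, n2 x = Real.sqrt ((τ (star x * x)).re))
    (u v b : A)
    (hu : star u * u = 1 ∧ u * star u = 1)
    (hv : star v * v = 1 ∧ v * star v = 1)
    (hb0 : 0 ≤ b) (hb1 : b ≤ 1)
    (ε : ℝ) (hε0 : 0 < ε) (hε1 : ε ≤ 1)
    (h : n2 (u - v * b) < ε) :
    n2 (u - v) < ε + Real.sqrt (2 * ε) :=
  unitary_close_of_close_to_contraction_general τ hτ1 hτpos n2 hn2 u v b hu hv hb0 hb1 ε h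
end

section
/- Let M be a unital C*-algebra and τ a faithful tracial positive unital linear functional on M; write ‖x‖₂ := √(Re τ(x*x)). Assume: (i) there is a sequence in the closed unit ball of M that is ‖·‖₂-dense in the closed unit ball; (ii) A ⊆ M is a *-subalgebra and there is a linear map E : M → M with E(y) ∈ A and ‖E(y)‖ ≤ ‖y‖ for all y, such that every sequence (u_n) of unitaries of M with ‖u_n x − x u_n‖₂ → 0 for all x ∈ M satisfies ‖u_n − E(u_n)‖₂ → 0; (iii) every a ∈ A with ‖a‖ ≤ 1 can be written a = v·b with v ∈ A a unitary of M and b ∈ A satisfying 0 ≤ b ≤ 1; (iv) every sequence of unitaries of M that is Cauchy for ‖·‖₂ has a ‖·‖₂-limit t ∈ M with ‖t‖ ≤ 1. Let α be a *-algebra automorphism of M that is approximately inner, i.e. there are unitaries (u_n) in M with ‖α(x) − u_n x u_n*‖₂ → 0 for every x ∈ M. Then there exist a unitary w ∈ M and a sequence of unitaries (z_n) all lying in A such that ‖α(x) − w z_n x z_n* w*‖₂ → 0 as n → ∞ for every x ∈ M. -/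
/-!
`‖x‖₂ = √(Re τ(x*x))` is the norm of the GNS pre-Hilbert space `PositiveLinearMap.PreGNS` of `τ`.
Left multiplication is bounded there by the C*-norm, and traciality makes right multiplication
bounded too, so unitaries act isometrically on both sides.

If `Ad(u_n) → α`, then `u_p* u_q` is a central sequence as `p, q → ∞`, hence close to its image
under `E`; the polar decomposition of that image yields unitaries `z_{p,q} ∈ A` with
`‖u_p* u_q - z_{p,q}‖₂ → 0`. Along a fast subsequence `n_k`, with `z_k = z_{n_k,n_{k+1}}`, the
unitaries `u_{n_k} (z_0 ⋯ z_{k-1})*` form a `‖·‖₂`-Cauchy sequence. Its limit `w` has `‖w‖ ≤ 1`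
and `‖w‖₂ = 1`, so it is a unitary by faithfulness, and `u_{n_k} ≈ w z_0 ⋯ z_{k-1}` in `‖·‖₂`.
-/

open Filter Topology
open scoped ComplexOrder InnerProductSpace

lemma norm_le_one_of_mem_unitary {E : Type*} [NormedRing E] [StarRing E] [CStarRing E] {u : E}
    (hu : u ∈ unitary E) : ‖u‖ ≤ 1 := by
  nontriviality E
  exact (CStarRing.norm_of_mem_unitary hu).le

lemma exists_strictMono_lt_of_tendsto_prod {g : ℕ × ℕ → ℝ}
    (hg : Tendsto g (atTop ×ˢ atTop) (𝓝 0)) {ε : ℕ → ℝ} (hε : ∀ k, 0 < ε k) :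
    ∃ φ : ℕ → ℕ, StrictMono φ ∧ ∀ k, g (φ k, φ (k + 1)) < ε k := by
  rw [prod_atTop_atTop_eq] at hg
  have hN : ∀ k, ∃ N, ∀ p ≥ N, ∀ q ≥ N, g (p, q) < ε k := fun k =>
    eventually_atTop_prod_self'.mp (hg.eventually (gt_mem_nhds (hε k)))
  choose N hN using hN
  obtain ⟨φ, hφ, hNφ⟩ := extraction_forall_of_eventually' fun k => ⟨N k, fun n hn => hn⟩
  exact ⟨φ, hφ, fun k => hN k _ (hNφ k) _ ((hNφ k).trans (hφ k.lt_succ_self).le)⟩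

lemma list_prod_map_range_mem {M S : Type*} [Monoid M] [SetLike S M] [SubmonoidClass S M]
    {A : S} {z : ℕ → M} (hz : ∀ k, z k ∈ A) (k : ℕ) : ((List.range k).map z).prod ∈ A :=
  list_prod_mem (by simp only [List.mem_map]; rintro _ ⟨i, -, rfl⟩; exact hz i)

namespace PositiveLinearMap

variable {M : Type*} [CStarAlgebra M] [PartialOrder M] [StarOrderedRing M]

section State

variable (f : M →ₚ[ℂ] ℂ)

lemma norm_toPreGNS_mul_le_norm_mul (a x : M) :
    ‖f.toPreGNS (a * x)‖ ≤ ‖a‖ * ‖f.toPreGNS x‖ :=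
  (f.leftMulMapPreGNS a).le_of_opNorm_le
    (LinearMap.mkContinuous_norm_le _ (norm_nonneg a) _) (f.toPreGNS x)

lemma norm_toPreGNS_unitary_mul {u : M} (hu : u ∈ unitary M) (x : M) :
    ‖f.toPreGNS (u * x)‖ = ‖f.toPreGNS x‖ := by
  have h : star (u * x) * (u * x) = star x * x := by
    rw [star_mul, mul_assoc, ← mul_assoc (star u), Unitary.star_mul_self_of_mem hu, one_mul]
  simp only [preGNS_norm_def, ofPreGNS_toPreGNS, h]

lemma norm_toPreGNS_of_mem_unitary (hf1 : f 1 = 1) {u : M} (hu : u ∈ unitary M) :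
    ‖f.toPreGNS u‖ = 1 := by
  simp [preGNS_norm_def, Unitary.star_mul_self_of_mem hu, hf1]

lemma sq_norm_toPreGNS (x : M) : ‖f.toPreGNS x‖ ^ 2 = (f (star x * x)).re := by
  simpa [← Complex.ofReal_pow] using congrArg Complex.re (f.preGNS_norm_sq (f.toPreGNS x))

lemma sq_norm_toPreGNS_le_re_apply {b : M} (hb0 : 0 ≤ b) (hb1 : b ≤ 1) :
    ‖f.toPreGNS b‖ ^ 2 ≤ (f b).re := by
  have hbb : star b * b ≤ b := by
    simpa [(IsSelfAdjoint.of_nonneg hb0).star_eq, sq] using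
      CStarAlgebra.pow_antitone hb0 hb1 (by norm_num : 1 ≤ 2)
  rw [sq_norm_toPreGNS]
  exact (Complex.le_def.mp (f.mono hbb)).1

lemma star_mul_self_eq_one_of_norm_le_one (hf1 : f 1 = 1)
    (hfaith : ∀ x, f (star x * x) = 0 → x = 0) {t : M} (ht : ‖t‖ ≤ 1)
    (ht2 : ‖f.toPreGNS t‖ = 1) : star t * t = 1 := by
  have hle : star t * t ≤ 1 := by
    rw [← CStarAlgebra.norm_le_one_iff_of_nonneg _ (star_mul_self_nonneg t),
      CStarRing.norm_star_mul_self]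
    nlinarith [norm_nonneg t]
  obtain ⟨s, hs⟩ := CStarAlgebra.nonneg_iff_eq_star_mul_self.mp (sub_nonneg.mpr hle)
  have hfs : f (star s * s) = 0 := by
    have hsq := f.preGNS_norm_sq (f.toPreGNS t)
    simp only [ofPreGNS_toPreGNS, ht2] at hsq
    rw [← hs, map_sub, hf1, ← hsq]
    simp
  have h0 : 1 - star t * t = 0 := by rw [hs, hfaith s hfs, star_zero, zero_mul]
  exact (sub_eq_zero.mp h0).symm

lemma norm_toPreGNS_sub_le_add_sqrt (hf1 : f 1 = 1) {v z b : M} (hv : v ∈ unitary M)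
    (hz : z ∈ unitary M) (hb0 : 0 ≤ b) (hb1 : b ≤ 1) :
    ‖f.toPreGNS (v - z)‖ ≤
      ‖f.toPreGNS (v - z * b)‖ + √(2 * ‖f.toPreGNS (v - z * b)‖) := by
  set ε := ‖f.toPreGNS (v - z * b)‖
  have hv2 := f.norm_toPreGNS_of_mem_unitary hf1 hv
  have hclose : 1 - ε ≤ RCLike.re ⟪f.toPreGNS v, f.toPreGNS (z * b)⟫_ℂ := by
    have h := re_inner_le_norm (𝕜 := ℂ) (f.toPreGNS v) (f.toPreGNS (v - z * b))
    rw [map_sub f.toPreGNS, inner_sub_right, map_sub, inner_self_eq_norm_sq, hv2,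
      ← map_sub f.toPreGNS] at h
    simp only [one_pow, one_mul] at h
    linarith
  have hinner : RCLike.re ⟪f.toPreGNS v, f.toPreGNS (z * b)⟫_ℂ ≤ ‖f.toPreGNS b‖ := by
    have h : ⟪f.toPreGNS v, f.toPreGNS (z * b)⟫_ℂ = ⟪f.toPreGNS (star z * v), f.toPreGNS b⟫_ℂ := by
      simp only [preGNS_inner_def, ofPreGNS_toPreGNS, star_mul, star_star, mul_assoc]
    rw [h]
    refine (re_inner_le_norm _ _).trans ?_
    rw [f.norm_toPreGNS_unitary_mul (Unitary.star_mem hz), hv2, one_mul]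
  -- so `1 - ε ≤ ‖b‖₂ ≤ 1`, and `‖1 - b‖₂² ≤ τ(1 - b) ≤ 1 - ‖b‖₂² ≤ 2ε`
  have hb := f.sq_norm_toPreGNS_le_re_apply hb0 hb1
  have hfb : (f b).re ≤ 1 := by simpa [hf1] using (Complex.le_def.mp (f.mono hb1)).1
  have h1b := f.sq_norm_toPreGNS_le_re_apply (sub_nonneg.mpr hb1) (sub_le_self 1 hb0)
  rw [map_sub f, hf1, Complex.sub_re, Complex.one_re] at h1b
  have hzb : ‖f.toPreGNS (z * b - z)‖ = ‖f.toPreGNS (b - 1)‖ := by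
    rw [← f.norm_toPreGNS_unitary_mul hz (b - 1), mul_sub, mul_one]
  calc ‖f.toPreGNS (v - z)‖ = ‖f.toPreGNS (v - z * b) + f.toPreGNS (z * b - z)‖ := by
        rw [← map_add, sub_add_sub_cancel]
    _ ≤ ε + ‖f.toPreGNS (z * b - z)‖ := norm_add_le _ _
    _ ≤ ε + √(2 * ε) := by
      rw [hzb, ← neg_sub, map_neg, norm_neg]
      gcongr
      apply Real.le_sqrt_of_sq_le
      nlinarith [norm_nonneg (f.toPreGNS b), norm_nonneg (f.toPreGNS (v - z * b))]

lemma exists_mem_unitary_tendsto_norm_toPreGNS_sub (hf1 : f 1 = 1) {S : Type*} [SetLike S M]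
    {A : S} {E : M → M} (hEA : ∀ y, E y ∈ A) (hEnorm : ∀ y, ‖E y‖ ≤ ‖y‖)
    (hpolar : ∀ a ∈ A, ‖a‖ ≤ 1 → ∃ v b : M, v ∈ A ∧ v ∈ unitary M ∧ 0 ≤ b ∧ b ≤ 1 ∧ a = v * b)
    {ι : Type*} {l : Filter ι} {v : ι → M} (hv : ∀ i, v i ∈ unitary M)
    (hvE : Tendsto (fun i => ‖f.toPreGNS (v i - E (v i))‖) l (𝓝 0)) :
    ∃ z : ι → M, (∀ i, z i ∈ A ∧ z i ∈ unitary M) ∧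
      Tendsto (fun i => ‖f.toPreGNS (v i - z i)‖) l (𝓝 0) := by
  choose z b hzA hz hb0 hb1 hEv using fun i =>
    hpolar _ (hEA (v i)) ((hEnorm _).trans (norm_le_one_of_mem_unitary (hv i)))
  have hsmall : Tendsto (fun ε : ℝ => ε + √(2 * ε)) (𝓝 0) (𝓝 0) := by
    simpa using (by fun_prop : Continuous fun ε : ℝ => ε + √(2 * ε)).tendsto 0
  refine ⟨z, fun i => ⟨hzA i, hz i⟩, squeeze_zero (fun _ => norm_nonneg _) (fun i => ?_)
    (hsmall.comp hvE)⟩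
  simpa only [Function.comp, hEv i] using
    f.norm_toPreGNS_sub_le_add_sqrt hf1 (hv i) (hz i) (hb0 i) (hb1 i)

end State

section Trace

variable {f : M →ₚ[ℂ] ℂ} (hf : ∀ x y, f (x * y) = f (y * x))
include hf

lemma norm_toPreGNS_star (x : M) : ‖f.toPreGNS (star x)‖ = ‖f.toPreGNS x‖ := by
  simp only [preGNS_norm_def, ofPreGNS_toPreGNS, star_star, hf x]

lemma norm_toPreGNS_mul_le_mul_norm (x a : M) :
    ‖f.toPreGNS (x * a)‖ ≤ ‖f.toPreGNS x‖ * ‖a‖ := by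
  rw [← norm_toPreGNS_star hf, star_mul, ← norm_toPreGNS_star hf x, ← norm_star a, mul_comm]
  exact f.norm_toPreGNS_mul_le_norm_mul _ _

lemma norm_toPreGNS_mul_unitary {u : M} (hu : u ∈ unitary M) (x : M) :
    ‖f.toPreGNS (x * u)‖ = ‖f.toPreGNS x‖ := by
  rw [← norm_toPreGNS_star hf, star_mul, f.norm_toPreGNS_unitary_mul (Unitary.star_mem hu),
    norm_toPreGNS_star hf]

lemma norm_toPreGNS_conj_sub_conj_le {a c : M} (ha : ‖a‖ ≤ 1) (hc : ‖c‖ ≤ 1) (x : M) :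
    ‖f.toPreGNS (a * x * star a - c * x * star c)‖ ≤ 2 * ‖x‖ * ‖f.toPreGNS (a - c)‖ := by
  have hsplit : a * x * star a - c * x * star c =
      (a - c) * (x * star a) + c * x * star (a - c) := by
    rw [star_sub]; noncomm_ring
  have hxa : ‖x * star a‖ ≤ ‖x‖ :=
    (norm_mul_le _ _).trans (mul_le_of_le_one_right (norm_nonneg _) (by rwa [norm_star]))
  have hcx : ‖c * x‖ ≤ ‖x‖ := (norm_mul_le _ _).trans (mul_le_of_le_one_left (norm_nonneg _) hc)
  rw [hsplit, map_add]
  calc _ ≤ ‖f.toPreGNS ((a - c) * (x * star a))‖ + ‖f.toPreGNS (c * x * star (a - c))‖ :=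
        norm_add_le _ _
    _ ≤ ‖f.toPreGNS (a - c)‖ * ‖x * star a‖ + ‖c * x‖ * ‖f.toPreGNS (star (a - c))‖ :=
        add_le_add (norm_toPreGNS_mul_le_mul_norm hf _ _) (f.norm_toPreGNS_mul_le_norm_mul _ _)
    _ ≤ ‖f.toPreGNS (a - c)‖ * ‖x‖ + ‖x‖ * ‖f.toPreGNS (a - c)‖ := by
        rw [norm_toPreGNS_star hf]; gcongr
    _ = 2 * ‖x‖ * ‖f.toPreGNS (a - c)‖ := by ring

lemma norm_toPreGNS_star_mul_commutator_le {a c : M} (ha : a ∈ unitary M) (hc : c ∈ unitary M)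
    (x y : M) : ‖f.toPreGNS (star a * c * x - x * (star a * c))‖ ≤
      ‖f.toPreGNS (y - a * x * star a)‖ + ‖f.toPreGNS (y - c * x * star c)‖ := by
  have h : star a * c * x - x * (star a * c) =
      star a * ((y - a * x * star a) - (y - c * x * star c)) * c := by
    calc _ = star a * c * x * (star c * c) - (star a * a) * x * star a * c := by
          rw [Unitary.star_mul_self_of_mem ha, Unitary.star_mul_self_of_mem hc]; noncomm_ring
      _ = _ := by noncomm_ring
  rw [h, norm_toPreGNS_mul_unitary hf hc, f.norm_toPreGNS_unitary_mul (Unitary.star_mem ha),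
    map_sub]
  exact norm_sub_le _ _

lemma norm_toPreGNS_mul_star_sub_mul_star {a a' y z : M} (ha : a ∈ unitary M)
    (hy : y ∈ unitary M) (hz : z ∈ unitary M) :
    ‖f.toPreGNS (a' * star (y * z) - a * star y)‖ = ‖f.toPreGNS (star a * a' - z)‖ := by
  have h : a' * star (y * z) - a * star y = a * ((star a * a' - z) * star z) * star y := by
    calc _ = (a * star a) * a' * star z * star y - a * (z * star z) * star y := by
          rw [Unitary.mul_star_self_of_mem ha, Unitary.mul_star_self_of_mem hz, star_mul]
          noncomm_ring
      _ = _ := by noncomm_ring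
  rw [h, norm_toPreGNS_mul_unitary hf (Unitary.star_mem hy), f.norm_toPreGNS_unitary_mul ha,
    norm_toPreGNS_mul_unitary hf (Unitary.star_mem hz)]

lemma mem_unitary_of_norm_le_one (hf1 : f 1 = 1) (hfaith : ∀ x, f (star x * x) = 0 → x = 0)
    {t : M} (ht : ‖t‖ ≤ 1) (ht2 : ‖f.toPreGNS t‖ = 1) : t ∈ unitary M := by
  refine Unitary.mem_iff.mpr ⟨f.star_mul_self_eq_one_of_norm_le_one hf1 hfaith ht ht2, ?_⟩
  simpa using f.star_mul_self_eq_one_of_norm_le_one hf1 hfaith (t := star t)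
    (by rwa [norm_star]) (by rwa [norm_toPreGNS_star hf])

lemma exists_mem_unitary_tendsto_of_cauchySeq (hf1 : f 1 = 1)
    (hfaith : ∀ x, f (star x * x) = 0 → x = 0)
    (hcomplete : ∀ u : ℕ → M, (∀ n, u n ∈ unitary M) →
      (∀ ε > (0 : ℝ), ∃ N, ∀ m ≥ N, ∀ n ≥ N, ‖f.toPreGNS (u m - u n)‖ < ε) →
      ∃ t : M, ‖t‖ ≤ 1 ∧ Tendsto (fun n => ‖f.toPreGNS (u n - t)‖) atTop (𝓝 0))
    {u : ℕ → M} (hu : ∀ n, u n ∈ unitary M) (hcauchy : CauchySeq fun n => f.toPreGNS (u n)) :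
    ∃ w ∈ unitary M, Tendsto (fun n => ‖f.toPreGNS (u n - w)‖) atTop (𝓝 0) := by
  obtain ⟨w, hw, hlim⟩ := hcomplete u hu <| by
    simpa only [Metric.cauchySeq_iff, dist_eq_norm, map_sub] using hcauchy
  have hnorm : Tendsto (fun n => ‖f.toPreGNS (u n)‖) atTop (𝓝 ‖f.toPreGNS w‖) :=
    (tendsto_iff_norm_sub_tendsto_zero.mpr (by simpa only [map_sub] using hlim)).norm
  have hw2 : ‖f.toPreGNS w‖ = 1 := tendsto_nhds_unique hnorm <| by
    simp only [f.norm_toPreGNS_of_mem_unitary hf1 (hu _), tendsto_const_nhds]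
  exact ⟨w, mem_unitary_of_norm_le_one hf hf1 hfaith hw hw2, hlim⟩

lemma cauchySeq_toPreGNS_mul_star_prod {a z : ℕ → M} (ha : ∀ k, a k ∈ unitary M)
    (hz : ∀ k, z k ∈ unitary M)
    (hclose : ∀ k, ‖f.toPreGNS (star (a k) * a (k + 1) - z k)‖ ≤ (1 / 2) ^ k) :
    CauchySeq fun k => f.toPreGNS (a k * star ((List.range k).map z).prod) := by
  refine cauchySeq_of_le_geometric (1 / 2) 1 (by norm_num) fun k => ?_
  rw [dist_comm, dist_eq_norm, ← map_sub, List.prod_range_succ,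
    norm_toPreGNS_mul_star_sub_mul_star hf (ha k) (list_prod_map_range_mem hz k) (hz k), one_mul]
  exact hclose k

lemma tendsto_norm_toPreGNS_sub_conj {a c : ℕ → M} (ha : ∀ n, ‖a n‖ ≤ 1) (hc : ∀ n, ‖c n‖ ≤ 1)
    {x y : M} (hy : Tendsto (fun n => ‖f.toPreGNS (y - a n * x * star (a n))‖) atTop (𝓝 0))
    (hac : Tendsto (fun n => ‖f.toPreGNS (a n - c n)‖) atTop (𝓝 0)) :
    Tendsto (fun n => ‖f.toPreGNS (y - c n * x * star (c n))‖) atTop (𝓝 0) := by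
  refine squeeze_zero (fun _ => norm_nonneg _) (fun n => ?_)
    (by simpa using hy.add (hac.const_mul (2 * ‖x‖)))
  calc ‖f.toPreGNS (y - c n * x * star (c n))‖
      = ‖f.toPreGNS (y - a n * x * star (a n)) +
          f.toPreGNS (a n * x * star (a n) - c n * x * star (c n))‖ := by
        rw [← map_add, sub_add_sub_cancel]
    _ ≤ ‖f.toPreGNS (y - a n * x * star (a n))‖ + 2 * ‖x‖ * ‖f.toPreGNS (a n - c n)‖ :=
        (norm_add_le _ _).trans (by gcongr; exact norm_toPreGNS_conj_sub_conj_le hf (ha n) (hc n) x)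

lemma tendsto_norm_toPreGNS_star_mul_sub_apply {u : ℕ → M} (hu : ∀ n, u n ∈ unitary M)
    {F E : M → M}
    (hF : ∀ x, Tendsto (fun n => ‖f.toPreGNS (F x - u n * x * star (u n))‖) atTop (𝓝 0))
    (hcentral : ∀ v : ℕ → M, (∀ n, v n ∈ unitary M) →
      (∀ x, Tendsto (fun n => ‖f.toPreGNS (v n * x - x * v n)‖) atTop (𝓝 0)) →
      Tendsto (fun n => ‖f.toPreGNS (v n - E (v n))‖) atTop (𝓝 0)) :
    Tendsto (fun p : ℕ × ℕ => ‖f.toPreGNS (star (u p.1) * u p.2 - E (star (u p.1) * u p.2))‖)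
      (atTop ×ˢ atTop) (𝓝 0) := by
  refine tendsto_iff_seq_tendsto.mpr fun p hp =>
    hcentral _ (fun k => mul_mem (Unitary.star_mem (hu _)) (hu _)) fun x => ?_
  refine squeeze_zero (fun _ => norm_nonneg _)
    (fun k => norm_toPreGNS_star_mul_commutator_le hf (hu (p k).1) (hu (p k).2) x (F x)) ?_
  simpa using ((hF x).comp (tendsto_fst.comp hp)).add ((hF x).comp (tendsto_snd.comp hp))

lemma exists_strictMono_tendsto_sub_mul {S : Type*} [SetLike S M] [SubmonoidClass S M] {A : S}
    (hf1 : f 1 = 1) (hfaith : ∀ x, f (star x * x) = 0 → x = 0)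
    (hcomplete : ∀ u : ℕ → M, (∀ n, u n ∈ unitary M) →
      (∀ ε > (0 : ℝ), ∃ N, ∀ m ≥ N, ∀ n ≥ N, ‖f.toPreGNS (u m - u n)‖ < ε) →
      ∃ t : M, ‖t‖ ≤ 1 ∧ Tendsto (fun n => ‖f.toPreGNS (u n - t)‖) atTop (𝓝 0))
    {u : ℕ → M} (hu : ∀ n, u n ∈ unitary M) {z : ℕ × ℕ → M}
    (hz : ∀ p, z p ∈ A ∧ z p ∈ unitary M)
    (hlim : Tendsto (fun p : ℕ × ℕ => ‖f.toPreGNS (star (u p.1) * u p.2 - z p)‖)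
      (atTop ×ˢ atTop) (𝓝 0)) :
    ∃ φ : ℕ → ℕ, StrictMono φ ∧ ∃ w ∈ unitary M, ∃ y : ℕ → M,
      (∀ k, y k ∈ A ∧ y k ∈ unitary M) ∧
      Tendsto (fun k => ‖f.toPreGNS (u (φ k) - w * y k)‖) atTop (𝓝 0) := by
  obtain ⟨φ, hφ, hclose⟩ :=
    exists_strictMono_lt_of_tendsto_prod hlim (ε := fun k => (1 / 2) ^ k) fun k => by positivity
  set y : ℕ → M := fun k => ((List.range k).map fun i => z (φ i, φ (i + 1))).prod
  have hy : ∀ k, y k ∈ A ∧ y k ∈ unitary M := fun k =>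
    ⟨list_prod_map_range_mem (fun _ => (hz _).1) k, list_prod_map_range_mem (fun _ => (hz _).2) k⟩
  obtain ⟨w, hw, hlimw⟩ := exists_mem_unitary_tendsto_of_cauchySeq hf hf1 hfaith hcomplete
    (fun k => mul_mem (hu (φ k)) (Unitary.star_mem (hy k).2))
    (cauchySeq_toPreGNS_mul_star_prod hf (fun k => hu (φ k)) (fun _ => (hz _).2)
      fun k => (hclose k).le)
  refine ⟨φ, hφ, w, hw, y, hy, ?_⟩
  convert hlimw using 2 with k
  rw [← norm_toPreGNS_mul_unitary hf (hy k).2 (u (φ k) * star (y k) - w), sub_mul, mul_assoc,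
    Unitary.star_mul_self_of_mem (hy k).2, mul_one]

end Trace

end PositiveLinearMap

theorem approxInner_factors_through_subalgebra_general
    {M : Type*} [NormedRing M] [StarRing M] [CStarRing M] [CompleteSpace M]
    [NormedAlgebra ℂ M] [StarModule ℂ M] [PartialOrder M] [StarOrderedRing M]
    (τ : M →ₗ[ℂ] ℂ) (hτ1 : τ 1 = 1)
    (hτpos : ∀ x : M, 0 ≤ (τ (star x * x)).re ∧ (τ (star x * x)).im = 0)
    (hτtr : ∀ x y : M, τ (x * y) = τ (y * x))
    (hτfaith : ∀ x : M, τ (star x * x) = 0 → x = 0)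
    (n2 : M → ℝ) (hn2 : ∀ x, n2 x = Real.sqrt ((τ (star x * x)).re))
    -- (ii) a contractive linear map into the *-subalgebra `A` absorbing central sequences
    (A : StarSubalgebra ℂ M) (E : M →ₗ[ℂ] M)
    (hEA : ∀ y : M, E y ∈ A) (hEnorm : ∀ y : M, ‖E y‖ ≤ ‖y‖)
    (hcentral : ∀ v : ℕ → M,
      (∀ n, star (v n) * v n = 1 ∧ v n * star (v n) = 1) →
      (∀ x : M, Tendsto (fun n => n2 (v n * x - x * v n)) atTop (nhds 0)) →
      Tendsto (fun n => n2 (v n - E (v n))) atTop (nhds 0))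
    -- (iii) polar decomposition of contractions of `A` inside `A`
    (hpolar : ∀ a ∈ A, ‖a‖ ≤ 1 → ∃ v b : M, v ∈ A ∧ b ∈ A ∧
      (star v * v = 1 ∧ v * star v = 1) ∧ 0 ≤ b ∧ b ≤ 1 ∧ a = v * b)
    -- (iv) `‖·‖₂`-Cauchy sequences of unitaries have `‖·‖₂`-limits of norm at most one
    (hcomplete : ∀ u : ℕ → M,
      (∀ n, star (u n) * u n = 1 ∧ u n * star (u n) = 1) →
      (∀ ε > (0 : ℝ), ∃ N, ∀ m ≥ N, ∀ n ≥ N, n2 (u m - u n) < ε) →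
      ∃ t : M, ‖t‖ ≤ 1 ∧ Tendsto (fun n => n2 (u n - t)) atTop (nhds 0))
    -- `α` is an approximately inner *-automorphism
    (α : M ≃⋆ₐ[ℂ] M)
    (hα : ∃ u : ℕ → M, (∀ n, star (u n) * u n = 1 ∧ u n * star (u n) = 1) ∧
      ∀ x : M, Tendsto (fun n => n2 (α x - u n * x * star (u n))) atTop (nhds 0)) :
    ∃ (w : M) (z : ℕ → M),
      (star w * w = 1 ∧ w * star w = 1) ∧
      (∀ n, z n ∈ A ∧ star (z n) * z n = 1 ∧ z n * star (z n) = 1) ∧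
      ∀ x : M, Tendsto
        (fun n => n2 (α x - w * (z n * x * star (z n)) * star w)) atTop (nhds 0) := by
  let _ : CStarAlgebra M := { ‹NormedRing M›, ‹StarRing M›, ‹CompleteSpace M›, ‹CStarRing M›,
    ‹NormedAlgebra ℂ M›, ‹StarModule ℂ M› with }
  let f : M →ₚ[ℂ] ℂ := .mk₀ τ fun a ha => by
    obtain ⟨b, rfl⟩ := CStarAlgebra.nonneg_iff_eq_star_mul_self.mp ha
    exact Complex.nonneg_iff.mpr ⟨(hτpos b).1, (hτpos b).2.symm⟩
  obtain rfl : n2 = fun x => ‖f.toPreGNS x‖ := funext hn2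
  simp only [← Unitary.mem_iff] at hcentral hpolar hcomplete hα ⊢
  obtain ⟨u, hu, hαu⟩ := hα
  obtain ⟨z, hz, hzlim⟩ := f.exists_mem_unitary_tendsto_norm_toPreGNS_sub hτ1 hEA hEnorm
    (fun a ha h1 => let ⟨v, b, hv, _, hvb⟩ := hpolar a ha h1; ⟨v, b, hv, hvb⟩)
    (fun _ => mul_mem (Unitary.star_mem (hu _)) (hu _))
    (PositiveLinearMap.tendsto_norm_toPreGNS_star_mul_sub_apply hτtr hu hαu hcentral)
  obtain ⟨φ, hφ, w, hw, y, hy, hlim⟩ :=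
    PositiveLinearMap.exists_strictMono_tendsto_sub_mul hτtr hτ1 hτfaith hcomplete hu hz hzlim
  refine ⟨w, y, hw, hy, fun x => ?_⟩
  simpa only [mul_assoc, star_mul] using PositiveLinearMap.tendsto_norm_toPreGNS_sub_conj hτtr
    (fun k => norm_le_one_of_mem_unitary (hu (φ k)))
    (fun k => norm_le_one_of_mem_unitary (mul_mem hw (hy k).2)) ((hαu x).comp hφ.tendsto_atTop) hlim

/-- Jones' proposition: under the hypotheses (separability of the unit ball in `‖·‖₂`,
a contractive linear map `E` into the *-subalgebra `A` absorbing central sequences of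
unitaries, polar decompositions of contractions of `A` inside `A`, and `‖·‖₂`-completeness
of the unitaries), every approximately inner *-automorphism `α` of `M` can be written as
`Ad(w) ∘ lim_n Ad(z_n)` with `w` a unitary of `M` and `z_n` unitaries lying in `A`. -/
theorem approxInner_factors_through_subalgebra
    {M : Type*} [NormedRing M] [StarRing M] [CStarRing M] [CompleteSpace M]
    [NormedAlgebra ℂ M] [StarModule ℂ M] [PartialOrder M] [StarOrderedRing M]
    (τ : M →ₗ[ℂ] ℂ) (hτ1 : τ 1 = 1)
    (hτpos : ∀ x : M, 0 ≤ (τ (star x * x)).re ∧ (τ (star x * x)).im = 0)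
    (hτtr : ∀ x y : M, τ (x * y) = τ (y * x))
    (hτfaith : ∀ x : M, τ (star x * x) = 0 → x = 0)
    (n2 : M → ℝ) (hn2 : ∀ x, n2 x = Real.sqrt ((τ (star x * x)).re))
    -- (i) `‖·‖₂`-separability of the closed unit ball
    (xs : ℕ → M) (hxs1 : ∀ m, ‖xs m‖ ≤ 1)
    (hdense : ∀ y : M, ‖y‖ ≤ 1 → ∀ ε > (0 : ℝ), ∃ m, n2 (y - xs m) < ε)
    -- (ii) a contractive linear map into the *-subalgebra `A` absorbing central sequences
    (A : StarSubalgebra ℂ M) (E : M →ₗ[ℂ] M)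
    (hEA : ∀ y : M, E y ∈ A) (hEnorm : ∀ y : M, ‖E y‖ ≤ ‖y‖)
    (hcentral : ∀ v : ℕ → M,
      (∀ n, star (v n) * v n = 1 ∧ v n * star (v n) = 1) →
      (∀ x : M, Tendsto (fun n => n2 (v n * x - x * v n)) atTop (nhds 0)) →
      Tendsto (fun n => n2 (v n - E (v n))) atTop (nhds 0))
    -- (iii) polar decomposition of contractions of `A` inside `A`
    (hpolar : ∀ a ∈ A, ‖a‖ ≤ 1 → ∃ v b : M, v ∈ A ∧ b ∈ A ∧
      (star v * v = 1 ∧ v * star v = 1) ∧ 0 ≤ b ∧ b ≤ 1 ∧ a = v * b)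
    -- (iv) `‖·‖₂`-Cauchy sequences of unitaries have `‖·‖₂`-limits of norm at most one
    (hcomplete : ∀ u : ℕ → M,
      (∀ n, star (u n) * u n = 1 ∧ u n * star (u n) = 1) →
      (∀ ε > (0 : ℝ), ∃ N, ∀ m ≥ N, ∀ n ≥ N, n2 (u m - u n) < ε) →
      ∃ t : M, ‖t‖ ≤ 1 ∧ Tendsto (fun n => n2 (u n - t)) atTop (nhds 0))
    -- `α` is an approximately inner *-automorphism
    (α : M ≃⋆ₐ[ℂ] M)
    (hα : ∃ u : ℕ → M, (∀ n, star (u n) * u n = 1 ∧ u n * star (u n) = 1) ∧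
      ∀ x : M, Tendsto (fun n => n2 (α x - u n * x * star (u n))) atTop (nhds 0)) :
    ∃ (w : M) (z : ℕ → M),
      (star w * w = 1 ∧ w * star w = 1) ∧
      (∀ n, z n ∈ A ∧ star (z n) * z n = 1 ∧ z n * star (z n) = 1) ∧
      ∀ x : M, Tendsto
        (fun n => n2 (α x - w * (z n * x * star (z n)) * star w)) atTop (nhds 0) :=
  approxInner_factors_through_subalgebra_general τ hτ1 hτpos hτtr hτfaith n2 hn2 A E hEA hEnorm
    hcentral hpolar hcomplete α hα
end

section
/- Crossed-product central sequences: Fix crossed-product data (N, τ, G, g ↦ u_g, M, (β_g)) as in the context. Assume additionally that for every g ≠ e and every norm-bounded sequence (y_n) in M with ‖y_n·(u_g m u_g*) − m·y_n‖₂ → 0 for all m ∈ M one has ‖y_n‖₂ → 0 (this encodes that no ψ_g = Ad(u_g), g ≠ e, is approximately inner on M). Then: (i) for every norm-bounded sequence (b_n) in N with ‖b_n x − x b_n‖₂ → 0 for all x ∈ N, setting c_n := |G|⁻¹ · Σ_{g∈G} u_g·β_e(b_n)·u_g*, one has c_n ∈ M, u_g c_n u_g* = c_n for all g ∈ G, and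 ‖b_n − c_n‖₂ → 0; (ii) conversely, every norm-bounded sequence (a_n) in M with u_g a_n u_g* = a_n for all g ∈ G and ‖a_n m − m a_n‖₂ → 0 for all m ∈ M satisfies ‖a_n x − x a_n‖₂ → 0 for all x ∈ N. (Together: the central sequence algebra of M ⋊ G equals the G-fixed part of the central sequence algebra of M.) -/
/-!
Writing `b = ∑ g, β g b * u g`, the summands `M u_g` are `τ`-orthogonal, so each `β g` is
contractive for `‖·‖₂`, and Fourier coefficients turn commutators into twisted commutators:
`β g (b m - m b) = β g b * Ad (u g) m - m * β g b` and
`β g (b u_g - u_g b) = β 1 b - Ad (u g) (β 1 b)`. For a central sequence `b_n`, the first identity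
makes `β g (b_n)`, `g ≠ 1`, an asymptotic intertwiner of `Ad (u g)` with the identity on `M`,
which outerness forces to vanish; the second makes `β 1 (b_n)` asymptotically `Ad (u g)`-invariant,
hence close to its `G`-average. Conversely a `G`-fixed sequence commutes with every `u_g`, so its
commutator with `x` is `∑ g, [a_n, β g x] * u g`.
-/

open Filter Topology

section TraceNorm

variable {N : Type*} [Ring N] [StarRing N] [Algebra ℂ N] (τ : N →ₗ[ℂ] ℂ)

noncomputable def traceNorm (x : N) : ℝ := √(τ (star x * x)).re

theorem traceNorm_nonneg (x : N) : 0 ≤ traceNorm τ x := Real.sqrt_nonneg _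

theorem traceNorm_sq {x : N} (hx : 0 ≤ (τ (star x * x)).re) :
    traceNorm τ x ^ 2 = (τ (star x * x)).re :=
  Real.sq_sqrt hx

theorem traceNorm_unitary_mul {U : N} (hU : U ∈ unitary N) (x : N) :
    traceNorm τ (U * x) = traceNorm τ x := by
  rw [traceNorm, traceNorm, star_mul, mul_assoc, ← mul_assoc (star U),
    Unitary.star_mul_self_of_mem hU, one_mul]

theorem traceNorm_mul_unitary (htr : ∀ x y, τ (x * y) = τ (y * x)) {U : N} (hU : U ∈ unitary N)
    (x : N) : traceNorm τ (x * U) = traceNorm τ x := by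
  rw [traceNorm, traceNorm, star_mul, mul_assoc, htr, mul_assoc, mul_assoc,
    Unitary.mul_star_self_of_mem hU, mul_one]

variable [StarModule ℂ N]

theorem traceNorm_smul (c : ℂ) (x : N) : traceNorm τ (c • x) = ‖c‖ * traceNorm τ x := by
  have : star (c • x) * (c • x) = (starRingEnd ℂ c * c) • (star x * x) := by
    rw [star_smul, smul_mul_assoc, mul_smul_comm, smul_smul]; rfl
  rw [traceNorm, traceNorm, this, map_smul, smul_eq_mul, Complex.conj_mul', ← Complex.ofReal_pow,
    Complex.re_ofReal_mul, Real.sqrt_mul (by positivity), Real.sqrt_sq (norm_nonneg c)]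

variable {τ}

/-- Cauchy–Schwarz for the form `(x, y) ↦ τ (star x * y)`. -/
theorem re_trace_star_mul_add_sq_le (hτ : ∀ x, 0 ≤ (τ (star x * x)).re) (x y : N) :
    ((τ (star x * y)).re + (τ (star y * x)).re) ^ 2 ≤
      4 * (τ (star x * x)).re * (τ (star y * y)).re := by
  have hquad : ∀ s : ℝ, 0 ≤ (τ (star x * x)).re * (s * s) +
      ((τ (star x * y)).re + (τ (star y * x)).re) * s + (τ (star y * y)).re := by
    intro s
    convert hτ ((s : ℂ) • x + y) using 1
    simp only [star_add, star_smul, Complex.star_def, Complex.conj_ofReal, add_mul, mul_add,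
      smul_mul_assoc, mul_smul_comm, map_add, map_smul, smul_eq_mul, Complex.add_re,
      Complex.re_ofReal_mul]
    ring
  have := discrim_le_zero hquad
  rw [discrim] at this
  linarith

theorem traceNorm_add_le (hτ : ∀ x, 0 ≤ (τ (star x * x)).re) (x y : N) :
    traceNorm τ (x + y) ≤ traceNorm τ x + traceNorm τ y := by
  have hcross : (τ (star x * y)).re + (τ (star y * x)).re ≤ 2 * traceNorm τ x * traceNorm τ y := by
    refine (abs_le_of_sq_le_sq' ?_ (by positivity [traceNorm_nonneg τ x, traceNorm_nonneg τ y])).2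
    rw [mul_pow, mul_pow, traceNorm_sq τ (hτ x), traceNorm_sq τ (hτ y)]
    linarith [re_trace_star_mul_add_sq_le hτ x y]
  have hexpand : (τ (star (x + y) * (x + y))).re = (τ (star x * x)).re +
      ((τ (star x * y)).re + (τ (star y * x)).re) + (τ (star y * y)).re := by
    simp only [star_add, add_mul, mul_add, map_add, Complex.add_re]
    ring
  rw [traceNorm, Real.sqrt_le_iff, hexpand]
  refine ⟨add_nonneg (traceNorm_nonneg τ x) (traceNorm_nonneg τ y), ?_⟩
  nlinarith [traceNorm_sq τ (hτ x), traceNorm_sq τ (hτ y)]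

theorem traceNorm_sum_le (hτ : ∀ x, 0 ≤ (τ (star x * x)).re) {ι : Type*} (s : Finset ι)
    (f : ι → N) : traceNorm τ (∑ i ∈ s, f i) ≤ ∑ i ∈ s, traceNorm τ (f i) := by
  classical
  induction s using Finset.induction_on with
  | empty => simp [traceNorm]
  | insert i s hi ih =>
    rw [Finset.sum_insert hi, Finset.sum_insert hi]
    exact (traceNorm_add_le hτ _ _).trans (by gcongr)

theorem tendsto_traceNorm_add (hτ : ∀ x, 0 ≤ (τ (star x * x)).re) {α : Type*} {l : Filter α}
    {x y : α → N} (hx : Tendsto (fun a => traceNorm τ (x a)) l (𝓝 0))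
    (hy : Tendsto (fun a => traceNorm τ (y a)) l (𝓝 0)) :
    Tendsto (fun a => traceNorm τ (x a + y a)) l (𝓝 0) :=
  squeeze_zero (fun _ => traceNorm_nonneg τ _) (fun _ => traceNorm_add_le hτ _ _)
    (by simpa using hx.add hy)

theorem tendsto_traceNorm_sum (hτ : ∀ x, 0 ≤ (τ (star x * x)).re) {α ι : Type*} {l : Filter α}
    (s : Finset ι) {f : ι → α → N} (hf : ∀ i ∈ s, Tendsto (fun a => traceNorm τ (f i a)) l (𝓝 0)) :
    Tendsto (fun a => traceNorm τ (∑ i ∈ s, f i a)) l (𝓝 0) :=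
  squeeze_zero (fun _ => traceNorm_nonneg τ _) (fun _ => traceNorm_sum_le hτ s _)
    (by simpa using tendsto_finsetSum s hf)

end TraceNorm

section CrossedProduct

variable {N : Type*} [Ring N] [StarRing N] [Algebra ℂ N] [StarModule ℂ N]
  {G : Type*} [Group G] [Fintype G]

structure IsFaithfulTrace (τ : N →ₗ[ℂ] ℂ) : Prop where
  re_nonneg : ∀ x, 0 ≤ (τ (star x * x)).re
  im_eq_zero : ∀ x, (τ (star x * x)).im = 0
  trace_mul_comm : ∀ x y, τ (x * y) = τ (y * x)
  eq_zero_of_trace_eq_zero : ∀ x, τ (star x * x) = 0 → x = 0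

structure IsCrossedProduct (τ : N →ₗ[ℂ] ℂ) (u : G →* N) (M : StarSubalgebra ℂ N)
    (β : G → N →ₗ[ℂ] N) : Prop where
  unitary_mem : ∀ g, u g ∈ unitary N
  conj_mem : ∀ g, ∀ m ∈ M, u g * m * star (u g) ∈ M
  coeff_mem : ∀ g b, β g b ∈ M
  sum_coeff_mul : ∀ b, ∑ g, β g b * u g = b
  trace_mul_eq_zero : ∀ g ≠ 1, ∀ m ∈ M, τ (m * u g) = 0

namespace IsCrossedProduct

variable {τ : N →ₗ[ℂ] ℂ} {u : G →* N} {M : StarSubalgebra ℂ N} {β : G → N →ₗ[ℂ] N}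

theorem star_map (h : IsCrossedProduct τ u M β) (g : G) : star (u g) = u g⁻¹ :=
  calc star (u g) = u g⁻¹ * u g * star (u g) := by rw [← map_mul, inv_mul_cancel, map_one, one_mul]
    _ = u g⁻¹ := by rw [mul_assoc, Unitary.mul_star_self_of_mem (h.unitary_mem g), mul_one]

theorem trace_star_sum_mul_sum (h : IsCrossedProduct τ u M β)
    (htr : ∀ x y, τ (x * y) = τ (y * x)) {m : G → N} (hm : ∀ g, m g ∈ M) :
    τ (star (∑ g, m g * u g) * ∑ g, m g * u g) = ∑ g, τ (star (m g) * m g) := by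
  have hterm : ∀ g k, τ (star (m g * u g) * (m k * u k)) = τ (star (m g) * m k * u (k * g⁻¹)) := by
    intro g k
    rw [star_mul, mul_assoc, htr, h.star_map, mul_assoc, mul_assoc, ← map_mul, ← mul_assoc]
  rw [star_sum, Finset.sum_mul_sum, map_sum]
  refine Finset.sum_congr rfl fun g _ => ?_
  rw [map_sum, Finset.sum_eq_single g]
  · rw [hterm, mul_inv_cancel, map_one, mul_one]
  · intro k _ hkg
    rw [hterm]
    exact h.trace_mul_eq_zero _ (mul_inv_eq_one.not.2 hkg) _
      (mul_mem (star_mem (hm g)) (hm k))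
  · simp

theorem coeff_eq_of_sum_eq (h : IsCrossedProduct τ u M β) (hτ : IsFaithfulTrace τ) {m : G → N}
    (hm : ∀ g, m g ∈ M) {b : N} (hb : ∑ g, m g * u g = b) (g : G) : β g b = m g := by
  set d : G → N := fun k => m k - β k b
  have hd : ∀ k, d k ∈ M := fun k => sub_mem (hm k) (h.coeff_mem k b)
  have hsum : ∑ k, d k * u k = 0 := by
    simp only [d, sub_mul, Finset.sum_sub_distrib, hb, h.sum_coeff_mul, sub_self]
  have hzero : ∑ k, (τ (star (d k) * d k)).re = 0 := by
    rw [← Complex.re_sum, ← h.trace_star_sum_mul_sum hτ.trace_mul_comm hd, hsum]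
    simp
  have hdg : (τ (star (d g) * d g)).re = 0 :=
    (Finset.sum_eq_zero_iff_of_nonneg fun k _ => hτ.re_nonneg (d k)).1 hzero g (Finset.mem_univ g)
  exact (sub_eq_zero.1 (hτ.eq_zero_of_trace_eq_zero _ (Complex.ext hdg (hτ.im_eq_zero _)))).symm

theorem coeff_mul_left (h : IsCrossedProduct τ u M β) (hτ : IsFaithfulTrace τ) {m : N}
    (hm : m ∈ M) (b : N) (g : G) : β g (m * b) = m * β g b :=
  h.coeff_eq_of_sum_eq hτ (fun k => mul_mem hm (h.coeff_mem k b))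
    (by simp only [mul_assoc, ← Finset.mul_sum, h.sum_coeff_mul]) g

theorem coeff_mul_right (h : IsCrossedProduct τ u M β) (hτ : IsFaithfulTrace τ) {m : N}
    (hm : m ∈ M) (b : N) (g : G) : β g (b * m) = β g b * (u g * m * star (u g)) := by
  refine h.coeff_eq_of_sum_eq hτ (fun k => mul_mem (h.coeff_mem k b) (h.conj_mem k m hm)) ?_ g
  simp only [mul_assoc, Unitary.star_mul_self_of_mem (h.unitary_mem _), mul_one]
  simp only [← mul_assoc, ← Finset.sum_mul, h.sum_coeff_mul]

theorem coeff_mul_map (h : IsCrossedProduct τ u M β) (hτ : IsFaithfulTrace τ) (b : N) (g k : G) :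
    β g (b * u k) = β (g * k⁻¹) b := by
  refine h.coeff_eq_of_sum_eq hτ (m := fun j => β (j * k⁻¹) b) (fun j => h.coeff_mem _ b) ?_ g
  rw [← Fintype.sum_equiv (Equiv.mulRight k) (fun j => β j b * u (j * k))
    (fun j => β (j * k⁻¹) b * u j) (fun j => by simp)]
  simp only [map_mul, ← mul_assoc, ← Finset.sum_mul, h.sum_coeff_mul]

theorem coeff_map_mul (h : IsCrossedProduct τ u M β) (hτ : IsFaithfulTrace τ) (b : N) (g k : G) :
    β g (u k * b) = u k * β (k⁻¹ * g) b * star (u k) := by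
  refine h.coeff_eq_of_sum_eq hτ (m := fun j => u k * β (k⁻¹ * j) b * star (u k))
    (fun j => h.conj_mem k _ (h.coeff_mem _ b)) ?_ g
  rw [← Fintype.sum_equiv (Equiv.mulLeft k) (fun j => u k * β j b * star (u k) * u (k * j))
    (fun j => u k * β (k⁻¹ * j) b * star (u k) * u j) (fun j => by simp)]
  simp only [h.star_map, mul_assoc, ← map_mul, inv_mul_cancel_left, ← Finset.mul_sum,
    h.sum_coeff_mul]

theorem traceNorm_coeff_le (h : IsCrossedProduct τ u M β) (hτ : IsFaithfulTrace τ) (g : G)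
    (b : N) : traceNorm τ (β g b) ≤ traceNorm τ b := by
  have hsum : (τ (star b * b)).re = ∑ k, (τ (star (β k b) * β k b)).re := by
    conv_lhs => rw [← h.sum_coeff_mul b]
    rw [h.trace_star_sum_mul_sum hτ.trace_mul_comm (h.coeff_mem · b), Complex.re_sum]
  rw [traceNorm, traceNorm, hsum]
  exact Real.sqrt_le_sqrt <| Finset.single_le_sum (f := fun k => (τ (star (β k b) * β k b)).re)
    (fun k _ => hτ.re_nonneg _) (Finset.mem_univ g)

theorem tendsto_traceNorm_coeff (h : IsCrossedProduct τ u M β) (hτ : IsFaithfulTrace τ) (g : G)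
    {α : Type*} {l : Filter α} {x : α → N} (hx : Tendsto (fun a => traceNorm τ (x a)) l (𝓝 0)) :
    Tendsto (fun a => traceNorm τ (β g (x a))) l (𝓝 0) :=
  squeeze_zero (fun _ => traceNorm_nonneg τ _) (fun _ => h.traceNorm_coeff_le hτ g _) hx

theorem coeff_commutator (h : IsCrossedProduct τ u M β) (hτ : IsFaithfulTrace τ) {m : N}
    (hm : m ∈ M) (b : N) (g : G) :
    β g (b * m - m * b) = β g b * (u g * m * star (u g)) - m * β g b := by
  rw [map_sub, h.coeff_mul_right hτ hm, h.coeff_mul_left hτ hm]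

theorem coeff_commutator_map (h : IsCrossedProduct τ u M β) (hτ : IsFaithfulTrace τ) (b : N)
    (g : G) : β g (b * u g - u g * b) = β 1 b - u g * β 1 b * star (u g) := by
  rw [map_sub, h.coeff_mul_map hτ, h.coeff_map_mul hτ, mul_inv_cancel, inv_mul_cancel]

theorem tendsto_traceNorm_commutator_of_forall_conj_eq (h : IsCrossedProduct τ u M β)
    (hτ : ∀ x, 0 ≤ (τ (star x * x)).re) (htr : ∀ x y, τ (x * y) = τ (y * x)) {a : ℕ → N}
    (hfix : ∀ n g, u g * a n * star (u g) = a n)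
    (hcent : ∀ m ∈ M, Tendsto (fun n => traceNorm τ (a n * m - m * a n)) atTop (𝓝 0)) (x : N) :
    Tendsto (fun n => traceNorm τ (a n * x - x * a n)) atTop (𝓝 0) := by
  have hcomm : ∀ n g, u g * a n = a n * u g := fun n g => by
    conv_rhs => rw [← hfix n g, mul_assoc, Unitary.star_mul_self_of_mem (h.unitary_mem g), mul_one]
  have hexpand : ∀ n, a n * x - x * a n = ∑ g, (a n * β g x - β g x * a n) * u g := by
    intro n
    have hterm : ∀ g, (a n * β g x - β g x * a n) * u g = a n * (β g x * u g) - β g x * u g * a n :=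
      fun g => by simp only [sub_mul, mul_assoc, ← hcomm]
    rw [Finset.sum_congr rfl fun g _ => hterm g, Finset.sum_sub_distrib, ← Finset.mul_sum,
      ← Finset.sum_mul, h.sum_coeff_mul]
  simp only [hexpand]
  exact tendsto_traceNorm_sum hτ _ fun g _ => by
    simpa only [traceNorm_mul_unitary τ htr (h.unitary_mem g)] using hcent _ (h.coeff_mem g x)

end IsCrossedProduct

end CrossedProduct

section ConjAverage

variable {N : Type*} [Ring N] [StarRing N] [Algebra ℂ N] {G : Type*} [Group G] [Fintype G]

noncomputable def conjAverage (u : G →* N) (x : N) : N :=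
  (Fintype.card G : ℂ)⁻¹ • ∑ g, u g * x * star (u g)

theorem conjAverage_mem [StarModule ℂ N] {u : G →* N} {M : StarSubalgebra ℂ N}
    (hM : ∀ g, ∀ m ∈ M, u g * m * star (u g) ∈ M) {x : N} (hx : x ∈ M) : conjAverage u x ∈ M :=
  M.smul_mem (sum_mem fun g _ => hM g x hx) _

theorem map_mul_conjAverage_mul_star (u : G →* N) (x : N) (g : G) :
    u g * conjAverage u x * star (u g) = conjAverage u x := by
  rw [conjAverage, mul_smul_comm, smul_mul_assoc, Finset.mul_sum, Finset.sum_mul]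
  congr 1
  exact Fintype.sum_equiv (Equiv.mulLeft g) _ _ fun k => by
    simp only [Equiv.coe_mulLeft, map_mul, star_mul, mul_assoc]

theorem sub_conjAverage (u : G →* N) (x : N) :
    x - conjAverage u x = (Fintype.card G : ℂ)⁻¹ • ∑ g, (x - u g * x * star (u g)) := by
  rw [Finset.sum_sub_distrib, smul_sub, conjAverage, Finset.sum_const, Finset.card_univ,
    ← Nat.cast_smul_eq_nsmul ℂ, smul_smul,
    inv_mul_cancel₀ (by exact_mod_cast Fintype.card_ne_zero), one_smul]

theorem tendsto_traceNorm_sub_conjAverage [StarModule ℂ N] {τ : N →ₗ[ℂ] ℂ}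
    (hτ : ∀ x, 0 ≤ (τ (star x * x)).re) {u : G →* N} {α : Type*} {l : Filter α} {x : α → N}
    (hx : ∀ g, Tendsto (fun a => traceNorm τ (x a - u g * x a * star (u g))) l (𝓝 0)) :
    Tendsto (fun a => traceNorm τ (x a - conjAverage u (x a))) l (𝓝 0) := by
  simp only [sub_conjAverage, traceNorm_smul]
  simpa using (tendsto_traceNorm_sum hτ Finset.univ fun g _ => hx g).const_mul
    ‖(Fintype.card G : ℂ)⁻¹‖

end ConjAverage

namespace IsCrossedProduct

variable {N : Type*} [NormedRing N] [StarRing N] [NormedAlgebra ℂ N] [StarModule ℂ N]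
  {G : Type*} [Group G] [Fintype G]
  {τ : N →ₗ[ℂ] ℂ} {u : G →* N} {M : StarSubalgebra ℂ N} {β : G → N →ₗ[ℂ] N}

theorem tendsto_traceNorm_coeff_of_central (h : IsCrossedProduct τ u M β)
    (hτ : IsFaithfulTrace τ) (hβnorm : ∀ g b, ‖β g b‖ ≤ ‖b‖) {g : G}
    (houter : ∀ y : ℕ → N, (∀ n, y n ∈ M) → (∃ C : ℝ, ∀ n, ‖y n‖ ≤ C) →
      (∀ m ∈ M, Tendsto (fun n => traceNorm τ (y n * (u g * m * star (u g)) - m * y n))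
        atTop (𝓝 0)) →
      Tendsto (fun n => traceNorm τ (y n)) atTop (𝓝 0))
    {b : ℕ → N} (hb : ∃ C : ℝ, ∀ n, ‖b n‖ ≤ C)
    (hcent : ∀ m ∈ M, Tendsto (fun n => traceNorm τ (b n * m - m * b n)) atTop (𝓝 0)) :
    Tendsto (fun n => traceNorm τ (β g (b n))) atTop (𝓝 0) := by
  obtain ⟨C, hC⟩ := hb
  refine houter _ (fun n => h.coeff_mem g (b n)) ⟨C, fun n => (hβnorm g (b n)).trans (hC n)⟩
    fun m hm => ?_
  simpa only [h.coeff_commutator hτ hm] using h.tendsto_traceNorm_coeff hτ g (hcent m hm)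

theorem tendsto_traceNorm_sub_conjAverage_coeff_one (h : IsCrossedProduct τ u M β)
    (hτ : IsFaithfulTrace τ) (hβnorm : ∀ g b, ‖β g b‖ ≤ ‖b‖)
    (houter : ∀ g : G, g ≠ 1 → ∀ y : ℕ → N, (∀ n, y n ∈ M) → (∃ C : ℝ, ∀ n, ‖y n‖ ≤ C) →
      (∀ m ∈ M, Tendsto (fun n => traceNorm τ (y n * (u g * m * star (u g)) - m * y n))
        atTop (𝓝 0)) →
      Tendsto (fun n => traceNorm τ (y n)) atTop (𝓝 0))
    {b : ℕ → N} (hb : ∃ C : ℝ, ∀ n, ‖b n‖ ≤ C)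
    (hcent : ∀ x, Tendsto (fun n => traceNorm τ (b n * x - x * b n)) atTop (𝓝 0)) :
    Tendsto (fun n => traceNorm τ (b n - conjAverage u (β 1 (b n)))) atTop (𝓝 0) := by
  classical
  have hsplit : ∀ n, b n - conjAverage u (β 1 (b n)) =
      ∑ g ∈ Finset.univ.erase 1, β g (b n) * u g + (β 1 (b n) - conjAverage u (β 1 (b n))) := by
    intro n
    have hb := h.sum_coeff_mul (b n)
    rw [← Finset.sum_erase_add _ _ (Finset.mem_univ 1), map_one, mul_one] at hb
    rw [← add_sub_assoc, hb]
  simp only [hsplit]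
  refine tendsto_traceNorm_add hτ.re_nonneg
    (tendsto_traceNorm_sum hτ.re_nonneg _ fun g hg => ?_)
    (tendsto_traceNorm_sub_conjAverage hτ.re_nonneg fun g => ?_)
  · simpa only [traceNorm_mul_unitary τ hτ.trace_mul_comm (h.unitary_mem g)] using
      h.tendsto_traceNorm_coeff_of_central hτ hβnorm (houter g (Finset.ne_of_mem_erase hg)) hb
        fun m _ => hcent m
  · simpa only [h.coeff_commutator_map hτ] using h.tendsto_traceNorm_coeff hτ g (hcent (u g))

end IsCrossedProduct

theorem crossedProduct_central_sequences_general
    {N : Type*} [NormedRing N] [StarRing N]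
    [NormedAlgebra ℂ N] [StarModule ℂ N]
    (τ : N →ₗ[ℂ] ℂ)
    (hτpos : ∀ x : N, 0 ≤ (τ (star x * x)).re ∧ (τ (star x * x)).im = 0)
    (hτtr : ∀ x y : N, τ (x * y) = τ (y * x))
    (hτfaith : ∀ x : N, τ (star x * x) = 0 → x = 0)
    (n2 : N → ℝ) (hn2 : ∀ x, n2 x = Real.sqrt ((τ (star x * x)).re))
    {G : Type*} [Group G] [Fintype G]
    (u : G →* N) (hu : ∀ g, star (u g) * u g = 1 ∧ u g * star (u g) = 1)
    (M : StarSubalgebra ℂ N)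
    (hMinv : ∀ g : G, ∀ m ∈ M, u g * m * star (u g) ∈ M)
    (β : G → N →ₗ[ℂ] N)
    (hβmem : ∀ g b, β g b ∈ M)
    (hβnorm : ∀ g b, ‖β g b‖ ≤ ‖b‖)
    (hβsum : ∀ b : N, b = ∑ g : G, β g b * u g)
    (hτM : ∀ g : G, g ≠ 1 → ∀ m ∈ M, τ (m * u g) = 0)
    -- no `Ad (u g)`, `g ≠ e`, is approximately inner on `M`:
    (houter : ∀ g : G, g ≠ 1 → ∀ y : ℕ → N, (∀ n, y n ∈ M) →
      (∃ C : ℝ, ∀ n, ‖y n‖ ≤ C) →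
      (∀ m ∈ M, Tendsto (fun n => n2 (y n * (u g * m * star (u g)) - m * y n))
        atTop (nhds 0)) →
      Tendsto (fun n => n2 (y n)) atTop (nhds 0)) :
    -- (i)
    (∀ b : ℕ → N, (∃ C : ℝ, ∀ n, ‖b n‖ ≤ C) →
      (∀ x : N, Tendsto (fun n => n2 (b n * x - x * b n)) atTop (nhds 0)) →
      ∀ c : ℕ → N,
        (∀ n, c n = ((Fintype.card G : ℂ))⁻¹ •
          ∑ g : G, u g * β 1 (b n) * star (u g)) →
        (∀ n, c n ∈ M) ∧
        (∀ n, ∀ g : G, u g * c n * star (u g) = c n) ∧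
        Tendsto (fun n => n2 (b n - c n)) atTop (nhds 0))
    ∧
    -- (ii)
    (∀ a : ℕ → N, (∃ C : ℝ, ∀ n, ‖a n‖ ≤ C) → (∀ n, a n ∈ M) →
      (∀ n, ∀ g : G, u g * a n * star (u g) = a n) →
      (∀ m ∈ M, Tendsto (fun n => n2 (a n * m - m * a n)) atTop (nhds 0)) →
      ∀ x : N, Tendsto (fun n => n2 (a n * x - x * a n)) atTop (nhds 0)) := by
  obtain rfl : n2 = traceNorm τ := funext hn2
  have hτ : IsFaithfulTrace τ := ⟨fun x => (hτpos x).1, fun x => (hτpos x).2, hτtr, hτfaith⟩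
  have h : IsCrossedProduct τ u M β := ⟨hu, hMinv, hβmem, fun b => (hβsum b).symm, hτM⟩
  refine ⟨fun b hb hcent c hc => ?_, fun a _ _ hfix hcent =>
    h.tendsto_traceNorm_commutator_of_forall_conj_eq hτ.re_nonneg hτtr hfix hcent⟩
  obtain rfl : c = fun n => conjAverage u (β 1 (b n)) := funext hc
  exact ⟨fun n => conjAverage_mem hMinv (hβmem 1 (b n)),
    fun n => map_mul_conjAverage_mul_star u _,
    h.tendsto_traceNorm_sub_conjAverage_coeff_one hτ hβnorm houter hb hcent⟩

/-- Central sequences of a crossed product `N = M ⋊ G` by a nowhere approximately inner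
outer action: (i) every bounded central sequence of `N` is asymptotically equal to its
`G`-averaged `M`-Fourier coefficient at the identity, which lies in `M` and is fixed by
every `Ad (u g)`; (ii) conversely every bounded `G`-fixed sequence in `M` which is central
for `M` is central for `N`. -/
theorem crossedProduct_central_sequences
    {N : Type*} [NormedRing N] [StarRing N] [CStarRing N] [CompleteSpace N]
    [NormedAlgebra ℂ N] [StarModule ℂ N]
    (τ : N →ₗ[ℂ] ℂ) (hτ1 : τ 1 = 1)
    (hτpos : ∀ x : N, 0 ≤ (τ (star x * x)).re ∧ (τ (star x * x)).im = 0)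
    (hτtr : ∀ x y : N, τ (x * y) = τ (y * x))
    (hτfaith : ∀ x : N, τ (star x * x) = 0 → x = 0)
    (n2 : N → ℝ) (hn2 : ∀ x, n2 x = Real.sqrt ((τ (star x * x)).re))
    {G : Type*} [Group G] [Fintype G]
    (u : G →* N) (hu : ∀ g, star (u g) * u g = 1 ∧ u g * star (u g) = 1)
    (M : StarSubalgebra ℂ N)
    (hMinv : ∀ g : G, ∀ m ∈ M, u g * m * star (u g) ∈ M)
    (β : G → N →ₗ[ℂ] N)
    (hβmem : ∀ g b, β g b ∈ M)
    (hβnorm : ∀ g b, ‖β g b‖ ≤ ‖b‖)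
    (hβsum : ∀ b : N, b = ∑ g : G, β g b * u g)
    (hτM : ∀ g : G, g ≠ 1 → ∀ m ∈ M, τ (m * u g) = 0)
    -- no `Ad (u g)`, `g ≠ e`, is approximately inner on `M`:
    (houter : ∀ g : G, g ≠ 1 → ∀ y : ℕ → N, (∀ n, y n ∈ M) →
      (∃ C : ℝ, ∀ n, ‖y n‖ ≤ C) →
      (∀ m ∈ M, Tendsto (fun n => n2 (y n * (u g * m * star (u g)) - m * y n))
        atTop (nhds 0)) →
      Tendsto (fun n => n2 (y n)) atTop (nhds 0)) :
    -- (i)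
    (∀ b : ℕ → N, (∃ C : ℝ, ∀ n, ‖b n‖ ≤ C) →
      (∀ x : N, Tendsto (fun n => n2 (b n * x - x * b n)) atTop (nhds 0)) →
      ∀ c : ℕ → N,
        (∀ n, c n = ((Fintype.card G : ℂ))⁻¹ •
          ∑ g : G, u g * β 1 (b n) * star (u g)) →
        (∀ n, c n ∈ M) ∧
        (∀ n, ∀ g : G, u g * c n * star (u g) = c n) ∧
        Tendsto (fun n => n2 (b n - c n)) atTop (nhds 0))
    ∧
    -- (ii)
    (∀ a : ℕ → N, (∃ C : ℝ, ∀ n, ‖a n‖ ≤ C) → (∀ n, a n ∈ M) →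
      (∀ n, ∀ g : G, u g * a n * star (u g) = a n) →
      (∀ m ∈ M, Tendsto (fun n => n2 (a n * m - m * a n)) atTop (nhds 0)) →
      ∀ x : N, Tendsto (fun n => n2 (a n * x - x * a n)) atTop (nhds 0)) :=
  crossedProduct_central_sequences_general τ hτpos hτtr hτfaith n2 hn2 u hu M hMinv β hβmem hβnorm
    hβsum hτM houter
end

section
/- Representations trivial on the approximately inner part give centrally trivial bimodules: Fix crossed-product data (N, τ, G, g ↦ u_g, M, (β_g)) as in the context. Let L ⊆ G be the set of g ∈ G for which the automorphism m ↦ u_g m u_g* of M is approximately inner, i.e. there exist unitaries (v_n) in M with ‖u_g m u_g* − v_n m v_n*‖₂ → 0 for every m ∈ M. Assume that for every g ∉ L, every norm-bounded sequence (y_n) in M with ‖y_n·(u_g m u_g*) − m·y_n‖₂ → 0 for all m ∈ M satisfies ‖y_n‖₂ → 0. Let d ≥ 1 and let π : G → U(d) be a group homomorphism into the d×d complex unitary matrices with π(h) = 1 for all h ∈ L. Equip V := N^d (d-tuples of elements of N) with the norm ‖ξ‖₂ := √(Σ_{i=1}^d ‖ξ_i‖₂²), the right action (ξ ◁ x)_i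 := ξ_i·x, and the left action (x ▷ ξ)_i := Σ_{g∈G} Σ_{j=1}^d π(g)_{ij}·(β_g(x)·u_g·ξ_j) for x ∈ N. Then for every norm-bounded sequence (x_n) in N with ‖x_n b − b x_n‖₂ → 0 for all b ∈ N, and for every ξ ∈ V, one has ‖x_n ▷ ξ − ξ ◁ x_n‖₂ → 0 as n → ∞. -/
open Filter Topology
open scoped ComplexOrder InnerProductSpace

/-!
The `‖·‖₂`-norm is the norm of the GNS pre-Hilbert space of the trace `τ`; traciality makes it
invariant under right multiplication by unitaries and gives `‖a b‖₂ ≤ ‖a‖₂ ‖b‖`. The terms of a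
Fourier expansion `b = Σ a_g u_g` are orthogonal, so `‖a_g‖₂ ≤ ‖b‖₂`, and the `g`-th coefficient of
`[b, m]` is `a_g (u_g m u_g*) - m a_g`. Hence for a central sequence `(x_n)` the coefficients
`β_g(x_n)` almost intertwine `Ad u_g`, so they vanish in `‖·‖₂` when `g ∉ L`. Finally
`(x ▷ ξ - ξ ◁ x)_i = Σ_g Σ_j (π(g) - 1)_{ij} β_g(x) u_g ξ_j + [x, ξ_i]`: the terms with `g ∈ L`
are zero because `π` is trivial there, and the others vanish with `β_g(x_n)`.
-/

theorem sum_sum_smul_mul_sub_mul_eq {R 𝕜 G ι : Type*} [Ring R] [Ring 𝕜] [Module 𝕜 R]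
    [Fintype G] [Fintype ι] [DecidableEq ι] (P : G → Matrix ι ι 𝕜) (b : G → R) (ξ : ι → R)
    {x : R} (hx : ∑ g, b g = x) (i : ι) :
    ∑ g, ∑ j, P g i j • (b g * ξ j) - ξ i * x =
      ∑ g, ∑ j, (P g - 1) i j • (b g * ξ j) + (x * ξ i - ξ i * x) := by
  subst hx
  simp [sub_smul, Matrix.one_apply, Finset.sum_sub_distrib, Finset.sum_mul]

namespace PositiveLinearMap

variable {A : Type*} [CStarAlgebra A] [PartialOrder A] [StarOrderedRing A] {f : A →ₚ[ℂ] ℂ}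

theorem norm_toPreGNS_mul_le_left (a b : A) :
    ‖f.toPreGNS (a * b)‖ ≤ ‖a‖ * ‖f.toPreGNS b‖ :=
  (f.leftMulMapPreGNS a).le_of_opNorm_le
    (LinearMap.mkContinuous_norm_le _ (norm_nonneg a) _) (f.toPreGNS b)

theorem norm_toPreGNS_star_s7 (htr : ∀ x y, f (x * y) = f (y * x)) (a : A) :
    ‖f.toPreGNS (star a)‖ = ‖f.toPreGNS a‖ := by
  simp only [preGNS_norm_def, ofPreGNS_toPreGNS, star_star, htr a]

theorem norm_toPreGNS_mul_le_right (htr : ∀ x y, f (x * y) = f (y * x)) (a b : A) :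
    ‖f.toPreGNS (a * b)‖ ≤ ‖f.toPreGNS a‖ * ‖b‖ := by
  rw [← norm_toPreGNS_star_s7 htr, star_mul, ← norm_toPreGNS_star_s7 htr a, mul_comm, ← norm_star b]
  exact norm_toPreGNS_mul_le_left _ _

theorem norm_toPreGNS_mul_unitary_s7 (htr : ∀ x y, f (x * y) = f (y * x)) (a : A) {w : A}
    (hw : w ∈ unitary A) :
    ‖f.toPreGNS (a * w)‖ = ‖f.toPreGNS a‖ := by
  simp only [preGNS_norm_def, ofPreGNS_toPreGNS, star_mul, mul_assoc, htr (star w),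
    Unitary.mul_star_self_of_mem hw, mul_one]

theorem tendsto_toPreGNS_mul_right (htr : ∀ x y, f (x * y) = f (y * x)) {ι : Type*}
    {l : Filter ι} {y : ι → A} (hy : Tendsto (fun n => f.toPreGNS (y n)) l (𝓝 0)) (w : A) :
    Tendsto (fun n => f.toPreGNS (y n * w)) l (𝓝 0) := by
  refine squeeze_zero_norm (fun n => norm_toPreGNS_mul_le_right htr (y n) w) ?_
  simpa using (tendsto_zero_iff_norm_tendsto_zero.mp hy).mul_const ‖w‖

theorem tendsto_toPreGNS_sum_sum_smul_mul_sub_mul (htr : ∀ x y, f (x * y) = f (y * x))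
    {G ι κ : Type*} [Fintype G] [Fintype ι] [DecidableEq ι] {l : Filter κ} (u : G → A)
    {P : G → Matrix ι ι ℂ} {S : Set G} (hP : ∀ g ∈ S, P g = 1) {a : κ → G → A} {x : κ → A}
    (hx : ∀ n, ∑ g, a n g * u g = x n)
    (hcent : ∀ b, Tendsto (fun n => f.toPreGNS (x n * b - b * x n)) l (𝓝 0))
    (hdecay : ∀ g ∉ S, Tendsto (fun n => f.toPreGNS (a n g)) l (𝓝 0)) (ξ : ι → A) (i : ι) :
    Tendsto (fun n => f.toPreGNS (∑ g, ∑ j, P g i j • (a n g * u g * ξ j) - ξ i * x n))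
      l (𝓝 0) := by
  have hterm (g : G) (j : ι) :
      Tendsto (fun n => (P g - 1) i j • f.toPreGNS (a n g * (u g * ξ j))) l (𝓝 0) := by
    by_cases hg : g ∈ S
    · simp [hP g hg, tendsto_const_nhds]
    · simpa using (tendsto_toPreGNS_mul_right htr (hdecay g hg) _).const_smul ((P g - 1) i j)
  have hrepr (n : κ) : ∑ g, ∑ j, P g i j • (a n g * u g * ξ j) - ξ i * x n =
      ∑ g, ∑ j, (P g - 1) i j • (a n g * u g * ξ j) + (x n * ξ i - ξ i * x n) :=
    sum_sum_smul_mul_sub_mul_eq P _ ξ (hx n) i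
  simp only [hrepr, map_add, map_sum, map_smul]
  simp only [mul_assoc]
  simpa using (tendsto_finsetSum _ fun g _ => tendsto_finsetSum _ fun j _ => hterm g j).add
    (hcent (ξ i))

variable {G : Type*} [Group G] [Fintype G] {M : StarSubalgebra ℂ A} {u : G →* A}

theorem norm_toPreGNS_le_of_sum_mul_unitary (htr : ∀ x y, f (x * y) = f (y * x))
    (hu : ∀ g, u g ∈ unitary A) (horth : ∀ g ≠ 1, ∀ m ∈ M, f (m * u g) = 0)
    {a : G → A} (ha : ∀ g, a g ∈ M) (h : G) :
    ‖f.toPreGNS (a h)‖ ≤ ‖f.toPreGNS (∑ g, a g * u g)‖ := by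
  set b := ∑ g, a g * u g
  have hstar : star (u h) = u h⁻¹ :=
    left_inv_eq_right_inv (Unitary.star_mul_self_of_mem (hu h))
      (by rw [← map_mul, mul_inv_cancel, map_one])
  -- only the `g = h` term of `b u_h*` survives against `a h`
  have hinner :
      ⟪f.toPreGNS (a h), f.toPreGNS (b * star (u h))⟫_ℂ = ‖f.toPreGNS (a h)‖ ^ 2 := by
    rw [preGNS_inner_def, preGNS_norm_sq]
    simp only [ofPreGNS_toPreGNS, b, Finset.sum_mul, Finset.mul_sum, map_sum, hstar, mul_assoc,
      ← map_mul]
    rw [Finset.sum_eq_single h]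
    · simp
    · intro g _ hg
      rw [← mul_assoc]
      exact horth _ (by simpa [mul_inv_eq_one] using hg) _ (mul_mem (star_mem (ha h)) (ha g))
    · simp
  have hcs := norm_inner_le_norm (𝕜 := ℂ) (f.toPreGNS (a h)) (f.toPreGNS (b * star (u h)))
  rw [hinner, norm_toPreGNS_mul_unitary_s7 htr _ (Unitary.star_mem (hu h)), Complex.norm_pow,
    Complex.norm_real, norm_norm] at hcs
  nlinarith [norm_nonneg (f.toPreGNS (a h)), norm_nonneg (f.toPreGNS b)]

theorem norm_toPreGNS_coeff_commutator_le (htr : ∀ x y, f (x * y) = f (y * x))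
    (hu : ∀ g, u g ∈ unitary A) (horth : ∀ g ≠ 1, ∀ m ∈ M, f (m * u g) = 0)
    (hMinv : ∀ g, ∀ m ∈ M, u g * m * star (u g) ∈ M)
    {a : G → A} (ha : ∀ g, a g ∈ M) {m : A} (hm : m ∈ M) (g : G) :
    ‖f.toPreGNS (a g * (u g * m * star (u g)) - m * a g)‖ ≤
      ‖f.toPreGNS ((∑ h, a h * u h) * m - m * ∑ h, a h * u h)‖ := by
  have hsum : ∑ h, (a h * (u h * m * star (u h)) - m * a h) * u h =
      (∑ h, a h * u h) * m - m * ∑ h, a h * u h := by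
    simp only [sub_mul, mul_assoc, Unitary.star_mul_self_of_mem (hu _), mul_one,
      Finset.sum_sub_distrib, Finset.sum_mul, Finset.mul_sum]
  rw [← hsum]
  exact norm_toPreGNS_le_of_sum_mul_unitary htr hu horth
    (fun h => sub_mem (mul_mem (ha h) (hMinv h m hm)) (mul_mem hm (ha h))) g

theorem tendsto_toPreGNS_coeff_commutator (htr : ∀ x y, f (x * y) = f (y * x))
    (hu : ∀ g, u g ∈ unitary A) (horth : ∀ g ≠ 1, ∀ m ∈ M, f (m * u g) = 0)
    (hMinv : ∀ g, ∀ m ∈ M, u g * m * star (u g) ∈ M) {κ : Type*} {l : Filter κ}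
    {a : κ → G → A} (ha : ∀ n g, a n g ∈ M) {x : κ → A} (hx : ∀ n, ∑ g, a n g * u g = x n)
    (hcent : ∀ b, Tendsto (fun n => f.toPreGNS (x n * b - b * x n)) l (𝓝 0))
    {m : A} (hm : m ∈ M) (g : G) :
    Tendsto (fun n => f.toPreGNS (a n g * (u g * m * star (u g)) - m * a n g)) l (𝓝 0) := by
  refine squeeze_zero_norm (fun n => ?_) (tendsto_zero_iff_norm_tendsto_zero.mp (hcent m))
  rw [← hx n]
  exact norm_toPreGNS_coeff_commutator_le htr hu horth hMinv (ha n) hm g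

end PositiveLinearMap

theorem rep_trivial_on_approxInner_centrally_trivial_general
    {N : Type*} [NormedRing N] [StarRing N] [CStarRing N] [CompleteSpace N]
    [NormedAlgebra ℂ N] [StarModule ℂ N]
    (τ : N →ₗ[ℂ] ℂ)
    (hτpos : ∀ x : N, 0 ≤ (τ (star x * x)).re ∧ (τ (star x * x)).im = 0)
    (hτtr : ∀ x y : N, τ (x * y) = τ (y * x))
    (n2 : N → ℝ) (hn2 : ∀ x, n2 x = Real.sqrt ((τ (star x * x)).re))
    {G : Type*} [Group G] [Fintype G]
    (u : G →* N) (hu : ∀ g, star (u g) * u g = 1 ∧ u g * star (u g) = 1)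
    (M : StarSubalgebra ℂ N)
    (hMinv : ∀ g : G, ∀ m ∈ M, u g * m * star (u g) ∈ M)
    (β : G → N →ₗ[ℂ] N)
    (hβmem : ∀ g b, β g b ∈ M)
    (hβnorm : ∀ g b, ‖β g b‖ ≤ ‖b‖)
    (hβsum : ∀ b : N, b = ∑ g : G, β g b * u g)
    (hτM : ∀ g : G, g ≠ 1 → ∀ m ∈ M, τ (m * u g) = 0)
    -- `L` is the set of `g` for which `Ad (u g)` is approximately inner on `M`:
    (L : Set G)
    -- non-approximately-inner elements force decay:
    (houter : ∀ g ∉ L, ∀ y : ℕ → N, (∀ n, y n ∈ M) →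
      (∃ C : ℝ, ∀ n, ‖y n‖ ≤ C) →
      (∀ m ∈ M, Tendsto (fun n => n2 (y n * (u g * m * star (u g)) - m * y n))
        atTop (nhds 0)) →
      Tendsto (fun n => n2 (y n)) atTop (nhds 0))
    -- a unitary representation of `G`, trivial on `L`:
    (d : ℕ)
    (π : G →* Matrix.unitaryGroup (Fin d) ℂ)
    (hπ : ∀ h ∈ L, π h = 1)
    -- the bimodule `V = N^d`, its `‖·‖₂`-norm, and its left and right actions:
    (Vnorm : (Fin d → N) → ℝ)
    (hVnorm : ∀ ξ : Fin d → N, Vnorm ξ = Real.sqrt (∑ i, (n2 (ξ i)) ^ 2))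
    (leftAct : N → (Fin d → N) → (Fin d → N))
    (hleft : ∀ (x : N) (ξ : Fin d → N) (i : Fin d),
      leftAct x ξ i = ∑ g : G, ∑ j : Fin d,
        ((π g : Matrix (Fin d) (Fin d) ℂ) i j) • (β g x * u g * ξ j))
    (rightAct : (Fin d → N) → N → (Fin d → N))
    (hright : ∀ (ξ : Fin d → N) (x : N) (i : Fin d), rightAct ξ x i = ξ i * x) :
    ∀ x : ℕ → N, (∃ C : ℝ, ∀ n, ‖x n‖ ≤ C) →
      (∀ b : N, Tendsto (fun n => n2 (x n * b - b * x n)) atTop (nhds 0)) →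
      ∀ ξ : Fin d → N,
        Tendsto (fun n => Vnorm (leftAct (x n) ξ - rightAct ξ (x n)))
          atTop (nhds 0) := by
  rintro x ⟨C, hC⟩ hcent ξ
  -- with the spectral order `τ` is a positive functional, and `n2` is the norm of its GNS space
  let _ : CStarAlgebra N := {}
  let _ := CStarAlgebra.spectralOrder N
  have := CStarAlgebra.spectralOrderedRing N
  let f : N →ₚ[ℂ] ℂ := .mk₀ τ fun a ha => by
    obtain ⟨b, rfl⟩ := CStarAlgebra.nonneg_iff_eq_star_mul_self.mp ha
    exact Complex.nonneg_iff.mpr ⟨(hτpos b).1, (hτpos b).2.symm⟩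
  have hn2f (y : N) : n2 y = ‖f.toPreGNS y‖ := hn2 y
  simp only [hn2f, ← tendsto_zero_iff_norm_tendsto_zero] at houter hcent
  have hx (n : ℕ) : ∑ g, β g (x n) * u g = x n := (hβsum (x n)).symm
  have hdecay (g : G) (hg : g ∉ L) : Tendsto (fun n => f.toPreGNS (β g (x n))) atTop (𝓝 0) :=
    houter g hg _ (hβmem g <| x ·) ⟨C, fun n => (hβnorm g _).trans (hC n)⟩ fun m hm =>
      PositiveLinearMap.tendsto_toPreGNS_coeff_commutator hτtr (fun g => Unitary.mem_iff.mpr (hu g))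
        hτM hMinv (fun n g => hβmem g (x n)) hx hcent hm g
  have hcomp (i : Fin d) :
      Tendsto (fun n => f.toPreGNS ((leftAct (x n) ξ - rightAct ξ (x n)) i)) atTop (𝓝 0) := by
    simpa only [Pi.sub_apply, hleft, hright] using
      PositiveLinearMap.tendsto_toPreGNS_sum_sum_smul_mul_sub_mul hτtr u
        (P := fun g => (π g : Matrix (Fin d) (Fin d) ℂ)) (fun g hg => by simp [hπ g hg])
        hx hcent hdecay ξ i
  simp only [hVnorm, hn2f]
  simpa using (tendsto_finsetSum _ fun i _ =>
    (tendsto_zero_iff_norm_tendsto_zero.mp (hcomp i)).pow 2).sqrt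

/-- Representations trivial on the approximately inner part of the action give centrally
trivial bimodules: with crossed-product data `(N, τ, G, u, M, β)`, `L ⊆ G` the set of
group elements whose associated automorphism `Ad (u g)` of `M` is approximately inner,
assuming the non-approximately-inner elements force almost-intertwining bounded sequences
in `M` to vanish in `‖·‖₂`, and `π : G → U(d)` a unitary representation with `π h = 1`
for `h ∈ L`, the bimodule `V = N^d` (with the indicated left and right actions) commutes
asymptotically with every bounded central sequence of `N`. -/
theorem rep_trivial_on_approxInner_centrally_trivial
    {N : Type*} [NormedRing N] [StarRing N] [CStarRing N] [CompleteSpace N]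
    [NormedAlgebra ℂ N] [StarModule ℂ N]
    (τ : N →ₗ[ℂ] ℂ) (hτ1 : τ 1 = 1)
    (hτpos : ∀ x : N, 0 ≤ (τ (star x * x)).re ∧ (τ (star x * x)).im = 0)
    (hτtr : ∀ x y : N, τ (x * y) = τ (y * x))
    (hτfaith : ∀ x : N, τ (star x * x) = 0 → x = 0)
    (n2 : N → ℝ) (hn2 : ∀ x, n2 x = Real.sqrt ((τ (star x * x)).re))
    {G : Type*} [Group G] [Fintype G]
    (u : G →* N) (hu : ∀ g, star (u g) * u g = 1 ∧ u g * star (u g) = 1)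
    (M : StarSubalgebra ℂ N)
    (hMinv : ∀ g : G, ∀ m ∈ M, u g * m * star (u g) ∈ M)
    (β : G → N →ₗ[ℂ] N)
    (hβmem : ∀ g b, β g b ∈ M)
    (hβnorm : ∀ g b, ‖β g b‖ ≤ ‖b‖)
    (hβsum : ∀ b : N, b = ∑ g : G, β g b * u g)
    (hτM : ∀ g : G, g ≠ 1 → ∀ m ∈ M, τ (m * u g) = 0)
    -- `L` is the set of `g` for which `Ad (u g)` is approximately inner on `M`:
    (L : Set G)
    (hL : ∀ g : G, g ∈ L ↔ ∃ v : ℕ → N,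
      (∀ n, v n ∈ M ∧ star (v n) * v n = 1 ∧ v n * star (v n) = 1) ∧
      ∀ m ∈ M, Tendsto (fun n => n2 (u g * m * star (u g) - v n * m * star (v n)))
        atTop (nhds 0))
    -- non-approximately-inner elements force decay:
    (houter : ∀ g ∉ L, ∀ y : ℕ → N, (∀ n, y n ∈ M) →
      (∃ C : ℝ, ∀ n, ‖y n‖ ≤ C) →
      (∀ m ∈ M, Tendsto (fun n => n2 (y n * (u g * m * star (u g)) - m * y n))
        atTop (nhds 0)) →
      Tendsto (fun n => n2 (y n)) atTop (nhds 0))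
    -- a unitary representation of `G`, trivial on `L`:
    (d : ℕ) (hd : 1 ≤ d)
    (π : G →* Matrix.unitaryGroup (Fin d) ℂ)
    (hπ : ∀ h ∈ L, π h = 1)
    -- the bimodule `V = N^d`, its `‖·‖₂`-norm, and its left and right actions:
    (Vnorm : (Fin d → N) → ℝ)
    (hVnorm : ∀ ξ : Fin d → N, Vnorm ξ = Real.sqrt (∑ i, (n2 (ξ i)) ^ 2))
    (leftAct : N → (Fin d → N) → (Fin d → N))
    (hleft : ∀ (x : N) (ξ : Fin d → N) (i : Fin d),
      leftAct x ξ i = ∑ g : G, ∑ j : Fin d,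
        ((π g : Matrix (Fin d) (Fin d) ℂ) i j) • (β g x * u g * ξ j))
    (rightAct : (Fin d → N) → N → (Fin d → N))
    (hright : ∀ (ξ : Fin d → N) (x : N) (i : Fin d), rightAct ξ x i = ξ i * x) :
    ∀ x : ℕ → N, (∃ C : ℝ, ∀ n, ‖x n‖ ≤ C) →
      (∀ b : N, Tendsto (fun n => n2 (x n * b - b * x n)) atTop (nhds 0)) →
      ∀ ξ : Fin d → N,
        Tendsto (fun n => Vnorm (leftAct (x n) ξ - rightAct ξ (x n)))
          atTop (nhds 0) :=
  rep_trivial_on_approxInner_centrally_trivial_general τ hτpos hτtr n2 hn2 u hu M hMinv β hβmem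
    hβnorm hβsum hτM L houter d π hπ Vnorm hVnorm leftAct hleft rightAct hright
end
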